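/- arXiv:math/9501231 — 3 statements merged into one kernel-verified Lean document; each statement's English description precedes it below -/
import Mathlib

section
/- For every prime power q and every integer k ≥ 2, the automorphism group of the graph D(k,q) acts transitively on the set of points, acts transitively on the set of lines, and acts transitively on the set of edges of D(k,q). -/
/-- Extend a vector `Fin k → F` to `ℕ → F` by zeros. -/
def extD {F : Type} [Zero F] {k : ℕ} (v : Fin k → F) : ℕ → F :=
  fun m => if h : m < k then v ⟨m, h⟩ else 0

/-- Right-hand side of the `m`-th incidence equation of `D(k,q)`
(coordinates are numbered from `0`, so the `m`-th equation concerns the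
coordinate with index `m`). -/
def rhsD {F : Type} [Mul F] (p l : ℕ → F) : ℕ → F
  | 1 => l 0 * p 0
  | 2 => l 1 * p 0
  | m => if m % 4 = 0 ∨ m % 4 = 3 then l 0 * p (m - 2) else l (m - 2) * p 0

/-- The incidence relation between a point `p` and a line `l`:
the first `k - 1` incidence equations hold. -/
def incD {F : Type} [Field F] (k : ℕ) (p l : Fin k → F) : Prop :=
  ∀ m, 1 ≤ m → m < k → extD l m - extD p m = rhsD (extD p) (extD l) m

/-- The bipartite graph `D(k,q)`; vertices are points (`Sum.inl`) and
lines (`Sum.inr`), both copies of `GF(q)^k`. -/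
def DGraph (k : ℕ) (F : Type) [Field F] :
    SimpleGraph ((Fin k → F) ⊕ (Fin k → F)) where
  Adj x y :=
    match x, y with
    | Sum.inl p, Sum.inr l => incD k p l
    | Sum.inr l, Sum.inl p => incD k p l
    | Sum.inl _, Sum.inl _ => False
    | Sum.inr _, Sum.inr _ => False
  symm := ⟨by rintro (p | l) (p' | l') h <;> exact h⟩
  loopless := ⟨by rintro (p | l) h <;> exact h⟩

namespace DProof

variable {F : Type} [Field F]

/-- the `m`-th incidence equation for sequences -/
def eqn (p l : ℕ → F) (m : ℕ) : Prop := l m - p m = rhsD p l m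

lemma rhsD_one (p l : ℕ → F) : rhsD p l 1 = l 0 * p 0 := rfl
lemma rhsD_two (p l : ℕ → F) : rhsD p l 2 = l 1 * p 0 := rfl
lemma rhsD_ge3 (p l : ℕ → F) (m : ℕ) (h : 3 ≤ m) :
    rhsD p l m = if m % 4 = 0 ∨ m % 4 = 3 then l 0 * p (m - 2) else l (m - 2) * p 0 := by
  obtain ⟨n, rfl⟩ : ∃ n, m = n + 3 := ⟨m - 3, by omega⟩
  rfl

lemma rhsD_03 (p l : ℕ → F) (m : ℕ) (h : 3 ≤ m) (h4 : m % 4 = 0 ∨ m % 4 = 3) :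
    rhsD p l m = l 0 * p (m - 2) := by rw [rhsD_ge3 p l m h, if_pos h4]

lemma rhsD_12 (p l : ℕ → F) (m : ℕ) (h : 3 ≤ m) (h4 : m % 4 = 1 ∨ m % 4 = 2) :
    rhsD p l m = l (m - 2) * p 0 := by rw [rhsD_ge3 p l m h, if_neg (by omega)]

lemma rhsD_congr (p l p' l' : ℕ → F) (m : ℕ) (h1 : 1 ≤ m)
    (hp : ∀ i, i ≤ m → p i = p' i) (hl : ∀ i, i ≤ m → l i = l' i) :
    rhsD p l m = rhsD p' l' m := by
  match m, h1 with
  | 1, _ => rw [rhsD_one, rhsD_one, hp 0 (by omega), hl 0 (by omega)]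
  | 2, _ => rw [rhsD_two, rhsD_two, hp 0 (by omega), hl 1 (by omega)]
  | (n+3), _ =>
    rw [rhsD_ge3 _ _ _ (by omega), rhsD_ge3 _ _ _ (by omega)]
    rw [hp 0 (by omega), hl 0 (by omega), hp (n+3-2) (by omega), hl (n+3-2) (by omega)]

/-- A "triangular family" of maps on coordinate sequences, preserving incidence. -/
structure Fam (F : Type) [Field F] where
  P : (ℕ → F) → ℕ → F
  L : (ℕ → F) → ℕ → F
  P_tri : ∀ f g : ℕ → F, ∀ m, (∀ i, i < m → f i = g i) → P f m - f m = P g m - g m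
  L_tri : ∀ f g : ℕ → F, ∀ m, (∀ i, i < m → f i = g i) → L f m - f m = L g m - g m
  inc : ∀ p l : ℕ → F, ∀ m, 1 ≤ m → (∀ i, 1 ≤ i → i ≤ m → eqn p l i) →
    eqn (P p) (L l) m

variable {k : ℕ}

/-- restriction to `Fin k` of the point map -/
def Fam.mapP (A : Fam F) (v : Fin k → F) : Fin k → F := fun i => A.P (extD v) i
def Fam.mapL (A : Fam F) (v : Fin k → F) : Fin k → F := fun i => A.L (extD v) i

lemma extD_lt (v : Fin k → F) (m : ℕ) (h : m < k) : extD v m = v ⟨m, h⟩ := dif_pos h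
lemma extD_ge (v : Fin k → F) (m : ℕ) (h : ¬ m < k) : extD v m = 0 := dif_neg h

lemma inj_of_tri (T : (ℕ → F) → ℕ → F)
    (tri : ∀ f g : ℕ → F, ∀ m, (∀ i, i < m → f i = g i) → T f m - f m = T g m - g m) :
    Function.Injective (fun (v : Fin k → F) (i : Fin k) => T (extD v) i) := by
  intro v w h
  have key : ∀ m, extD v m = extD w m := by
    intro m
    induction m using Nat.strong_induction_on with
    | _ m ih =>
      by_cases hm : m < k
      · have h1 := tri (extD v) (extD w) m (fun i hi => ih i hi)
        have h2 : T (extD v) m = T (extD w) m := congrFun h ⟨m, hm⟩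
        rw [h2] at h1
        exact sub_right_injective h1
      · rw [extD_ge v m hm, extD_ge w m hm]
  funext i
  have := key i
  rwa [extD_lt v i i.2, extD_lt w i i.2] at this

/-- From a finite graph `Equiv` preserving adjacency forwards, get an isomorphism. -/
def isoOfForward {V : Type} [Finite V] (G : SimpleGraph V) (e : V ≃ V)
    (h : ∀ x y, G.Adj x y → G.Adj (e x) (e y)) : G ≃g G := by
  refine ⟨e, ?_⟩
  have h' : ∀ x y, G.Adj x y → G.Adj (e.symm x) (e.symm y) := by
    intro x y hxy
    let S := {q : V × V // G.Adj q.1 q.2}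
    have : Finite S := Subtype.finite
    let T : S → S := fun s => ⟨(e s.1.1, e s.1.2), h _ _ s.2⟩
    have hT : Function.Injective T := by
      intro a b hab
      have h1 : e a.1.1 = e b.1.1 := congrArg (fun s : S => s.1.1) hab
      have h2 : e a.1.2 = e b.1.2 := congrArg (fun s : S => s.1.2) hab
      exact Subtype.ext (Prod.ext (e.injective h1) (e.injective h2))
    obtain ⟨s, hs⟩ := (Finite.injective_iff_surjective.mp hT) ⟨(x, y), hxy⟩
    have h1 : e s.1.1 = x := congrArg (fun s : S => s.1.1) hs
    have h2 : e s.1.2 = y := congrArg (fun s : S => s.1.2) hs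
    have e1 : s.1.1 = e.symm x := by rw [← h1, Equiv.symm_apply_apply]
    have e2 : s.1.2 = e.symm y := by rw [← h2, Equiv.symm_apply_apply]
    have := s.2
    rwa [e1, e2] at this
  intro a b
  constructor
  · intro hab
    have := h' _ _ hab
    rwa [Equiv.symm_apply_apply, Equiv.symm_apply_apply] at this
  · exact h a b

end DProof

namespace DProof
variable {F : Type} [Field F] [Fintype F] {k : ℕ}

lemma fam_forward (A : Fam F) (hk : 2 ≤ k) (p l : Fin k → F) (h : incD k p l) :
    incD k (A.mapP p) (A.mapL l) := by
  intro m h1 hm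
  have hPe : ∀ i, i ≤ m → extD (A.mapP p) i = A.P (extD p) i := by
    intro i hi
    rw [extD_lt _ i (lt_of_le_of_lt hi hm)]
    rfl
  have hLe : ∀ i, i ≤ m → extD (A.mapL l) i = A.L (extD l) i := by
    intro i hi
    rw [extD_lt _ i (lt_of_le_of_lt hi hm)]
    rfl
  rw [hPe m le_rfl, hLe m le_rfl,
    rhsD_congr _ _ (A.P (extD p)) (A.L (extD l)) m h1 hPe hLe]
  exact A.inc (extD p) (extD l) m h1 (fun i hi1 hi2 => h i hi1 (lt_of_le_of_lt hi2 hm))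

/-- The graph isomorphism of `DGraph k F` induced by a family. -/
noncomputable def Fam.toIso (A : Fam F) (hk : 2 ≤ k) : DGraph k F ≃g DGraph k F :=
  isoOfForward (DGraph k F)
    (Equiv.ofBijective (Sum.map (A.mapP (k := k)) (A.mapL (k := k)))
      (Finite.injective_iff_bijective.mp
        (Function.Injective.sumMap (inj_of_tri A.P A.P_tri) (inj_of_tri A.L A.L_tri))))
    (by rintro (p | l) (p' | l') h
        · exact h.elim
        · exact fam_forward A hk p l' h
        · exact fam_forward A hk p' l h
        · exact h.elim)

lemma Fam.toIso_inl (A : Fam F) (hk : 2 ≤ k) (v : Fin k → F) :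
    A.toIso hk (Sum.inl v) = Sum.inl (A.mapP v) := rfl

lemma Fam.toIso_inr (A : Fam F) (hk : 2 ≤ k) (v : Fin k → F) :
    A.toIso hk (Sum.inr v) = Sum.inr (A.mapL v) := rfl

end DProof
namespace DProof
variable {F : Type} [Field F]

/-! ### The family τ(a): translate the first point coordinate -/

def tauP (a : F) (f : ℕ → F) : ℕ → F := fun m =>
  if m = 0 then f 0 + a
  else if m % 4 = 2 ∨ m % 4 = 0 then f m + a * f (m-1)
  else f m

def tauL (a : F) (f : ℕ → F) : ℕ → F := fun m =>
  if m = 0 then f 0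
  else if m = 1 then f 1 + a * f 0
  else if m = 2 then f 2 + 2*a*f 1 + a^2*f 0
  else if m % 4 = 0 then f m + a * f (m-1)
  else if m % 4 = 1 then f m + a * f (m-2)
  else if m % 4 = 2 then f m + a * f (m-2) + a * f (m-1) + a^2 * f (m-3)
  else f m

lemma tauP_0 (a : F) (f : ℕ → F) : tauP a f 0 = f 0 + a := by
  unfold tauP; rw [if_pos rfl]
lemma tauP_20 (a : F) (f : ℕ → F) (m : ℕ) (h : m % 4 = 2 ∨ m % 4 = 0) (h1 : 1 ≤ m) :
    tauP a f m = f m + a * f (m-1) := by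
  unfold tauP; rw [if_neg (by omega), if_pos h]
lemma tauP_13 (a : F) (f : ℕ → F) (m : ℕ) (h : m % 4 = 1 ∨ m % 4 = 3) :
    tauP a f m = f m := by
  unfold tauP; rw [if_neg (by omega), if_neg (by omega)]

lemma tauL_0 (a : F) (f : ℕ → F) : tauL a f 0 = f 0 := by unfold tauL; rw [if_pos rfl]
lemma tauL_1 (a : F) (f : ℕ → F) : tauL a f 1 = f 1 + a * f 0 := by
  unfold tauL; rw [if_neg (by omega), if_pos rfl]
lemma tauL_2 (a : F) (f : ℕ → F) : tauL a f 2 = f 2 + 2*a*f 1 + a^2*f 0 := by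
  unfold tauL; rw [if_neg (by omega), if_neg (by omega), if_pos rfl]
lemma tauL_3 (a : F) (f : ℕ → F) (m : ℕ) (h : m % 4 = 3) : tauL a f m = f m := by
  unfold tauL
  rw [if_neg (by omega), if_neg (by omega), if_neg (by omega), if_neg (by omega),
    if_neg (by omega), if_neg (by omega)]
lemma tauL_f0 (a : F) (f : ℕ → F) (m : ℕ) (h : m % 4 = 0) (h4 : 4 ≤ m) :
    tauL a f m = f m + a * f (m-1) := by
  unfold tauL
  rw [if_neg (by omega), if_neg (by omega), if_neg (by omega), if_pos h]
lemma tauL_f1 (a : F) (f : ℕ → F) (m : ℕ) (h : m % 4 = 1) (h4 : 5 ≤ m) :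
    tauL a f m = f m + a * f (m-2) := by
  unfold tauL
  rw [if_neg (by omega), if_neg (by omega), if_neg (by omega), if_neg (by omega), if_pos h]
lemma tauL_f2 (a : F) (f : ℕ → F) (m : ℕ) (h : m % 4 = 2) (h4 : 6 ≤ m) :
    tauL a f m = f m + a * f (m-2) + a * f (m-1) + a^2 * f (m-3) := by
  unfold tauL
  rw [if_neg (by omega), if_neg (by omega), if_neg (by omega), if_neg (by omega),
    if_neg (by omega), if_pos h]

lemma tau_P_tri (a : F) : ∀ f g : ℕ → F, ∀ m, (∀ i, i < m → f i = g i) →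
    tauP a f m - f m = tauP a g m - g m := by
  intro f g m hfg
  unfold tauP
  split_ifs with h1 h2
  · subst h1; ring
  · rw [hfg (m-1) (by omega)]; ring
  · ring

lemma tau_L_tri (a : F) : ∀ f g : ℕ → F, ∀ m, (∀ i, i < m → f i = g i) →
    tauL a f m - f m = tauL a g m - g m := by
  intro f g m hfg
  unfold tauL
  split_ifs with h1 h2 h3 h4 h5 h6
  · subst h1; ring
  · subst h2; rw [hfg 0 (by omega)]; ring
  · subst h3; rw [hfg 0 (by omega), hfg 1 (by omega)]; ring
  · rw [hfg (m-1) (by omega)]; ring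
  · rw [hfg (m-2) (by omega)]; ring
  · rw [hfg (m-1) (by omega), hfg (m-2) (by omega), hfg (m-3) (by omega)]; ring
  · ring

lemma tau_inc (a : F) : ∀ p l : ℕ → F, ∀ m, 1 ≤ m →
    (∀ i, 1 ≤ i → i ≤ m → eqn p l i) → eqn (tauP a p) (tauL a l) m := by
  intro p l m h1 hE
  unfold eqn at *
  rcases Nat.lt_or_ge m 4 with hm | hm
  · interval_cases m
    · -- m = 1
      have E1 := hE 1 (by omega) (by omega); rw [rhsD_one] at E1
      rw [rhsD_one, tauL_1, tauL_0, tauP_13 a p 1 (by omega), tauP_0]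
      linear_combination E1
    · -- m = 2
      have E1 := hE 1 (by omega) (by omega); rw [rhsD_one] at E1
      have E2 := hE 2 (by omega) (by omega); rw [rhsD_two] at E2
      rw [rhsD_two, tauL_2, tauL_1, tauP_20 a p 2 (by omega) (by omega), tauP_0]
      norm_num
      linear_combination E2 + a * E1
    · -- m = 3
      have E3 := hE 3 (by omega) (by omega); rw [rhsD_03 p l 3 (by omega) (by omega)] at E3
      rw [rhsD_03 _ _ 3 (by omega) (by omega), tauL_3 a l 3 (by omega), tauL_0,
        tauP_13 a p 3 (by omega), tauP_13 a p 1 (by omega)]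
      norm_num
      linear_combination E3
  · have hr : m % 4 = 0 ∨ m % 4 = 1 ∨ m % 4 = 2 ∨ m % 4 = 3 := by omega
    have Em := hE m (by omega) le_rfl
    rcases hr with hr | hr | hr | hr
    · -- m % 4 = 0 : L = l m + a l (m-1), P = p m + a p (m-1)
      -- rhs = l 0 * (p (m-2) + a * p (m-3))
      have Em1 := hE (m-1) (by omega) (by omega)
      rw [rhsD_03 p l m (by omega) (by omega)] at Em
      rw [rhsD_03 p l (m-1) (by omega) (by omega)] at Em1
      have i1 : m - 1 - 2 = m - 3 := by omega
      rw [i1] at Em1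
      rw [rhsD_03 _ _ m (by omega) (by omega), tauL_f0 a l m hr (by omega), tauL_0,
        tauP_20 a p m (by omega) (by omega), tauP_20 a p (m-2) (by omega) (by omega)]
      have i2 : m - 2 - 1 = m - 3 := by omega
      rw [i2]
      linear_combination Em + a * Em1
    · -- m % 4 = 1 : L = l m + a l (m-2), P = p m ; rhs = l (m-2) * (p 0 + a)
      rw [rhsD_12 p l m (by omega) (by omega)] at Em
      rw [rhsD_12 _ _ m (by omega) (by omega), tauL_f1 a l m hr (by omega),
        tauP_13 a p m (by omega), tauP_0, tauL_3 a l (m-2) (by omega)]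
      linear_combination Em
    · -- m % 4 = 2 : rhs = (l (m-2) + a * l (m-3)) * (p 0 + a)
      have Em1 := hE (m-1) (by omega) (by omega)
      rw [rhsD_12 p l m (by omega) (by omega)] at Em
      rw [rhsD_12 p l (m-1) (by omega) (by omega)] at Em1
      have i1 : m - 1 - 2 = m - 3 := by omega
      rw [i1] at Em1
      rw [rhsD_12 _ _ m (by omega) (by omega), tauL_f2 a l m hr (by omega),
        tauP_20 a p m (by omega) (by omega), tauP_0, tauL_f0 a l (m-2) (by omega) (by omega)]
      have i2 : m - 2 - 1 = m - 3 := by omega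
      rw [i2]
      linear_combination Em + a * Em1
    · -- m % 4 = 3 : L = l m, P = p m; rhs = l 0 * p (m-2)
      rw [rhsD_03 p l m (by omega) (by omega)] at Em
      rw [rhsD_03 _ _ m (by omega) (by omega), tauL_3 a l m hr, tauL_0,
        tauP_13 a p m (by omega), tauP_13 a p (m-2) (by omega)]
      linear_combination Em

def tauFam (a : F) : Fam F :=
  ⟨tauP a, tauL a, tau_P_tri a, tau_L_tri a, tau_inc a⟩

end DProof
namespace DProof
variable {F : Type} [Field F]

/-! ### The family σ(b): translate the first line coordinate -/

def sigP (b : F) (f : ℕ → F) : ℕ → F := fun m =>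
  if m = 0 then f 0
  else if m = 1 then f 1 - b * f 0
  else if m = 3 then f 3 - 2*b*f 1 + b^2*f 0
  else if m % 4 = 0 then f m - b * f (m-2)
  else if m % 4 = 1 then f m - b * f (m-3)
  else if m % 4 = 3 then f m - b*f (m-3) - b*f (m-2) + b^2 * f (m-5)
  else f m

def sigL (b : F) (f : ℕ → F) : ℕ → F := fun m =>
  if m = 0 then f 0 + b
  else if m = 3 then f 3 - b * f 1
  else if 5 ≤ m ∧ (m % 4 = 1 ∨ m % 4 = 3) then f m - b * f (m-3)
  else f m

lemma sigP_0 (b : F) (f : ℕ → F) : sigP b f 0 = f 0 := by unfold sigP; rw [if_pos rfl]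
lemma sigP_1 (b : F) (f : ℕ → F) : sigP b f 1 = f 1 - b * f 0 := by
  unfold sigP; rw [if_neg (by omega), if_pos rfl]
lemma sigP_3 (b : F) (f : ℕ → F) : sigP b f 3 = f 3 - 2*b*f 1 + b^2*f 0 := by
  unfold sigP; rw [if_neg (by omega), if_neg (by omega), if_pos rfl]
lemma sigP_r0 (b : F) (f : ℕ → F) (m : ℕ) (h : m % 4 = 0) (h4 : 4 ≤ m) :
    sigP b f m = f m - b * f (m-2) := by
  unfold sigP; rw [if_neg (by omega), if_neg (by omega), if_neg (by omega), if_pos h]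
lemma sigP_r1 (b : F) (f : ℕ → F) (m : ℕ) (h : m % 4 = 1) (h4 : 5 ≤ m) :
    sigP b f m = f m - b * f (m-3) := by
  unfold sigP
  rw [if_neg (by omega), if_neg (by omega), if_neg (by omega), if_neg (by omega), if_pos h]
lemma sigP_r3 (b : F) (f : ℕ → F) (m : ℕ) (h : m % 4 = 3) (h4 : 7 ≤ m) :
    sigP b f m = f m - b*f (m-3) - b*f (m-2) + b^2 * f (m-5) := by
  unfold sigP
  rw [if_neg (by omega), if_neg (by omega), if_neg (by omega), if_neg (by omega),
    if_neg (by omega), if_pos h]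
lemma sigP_r2 (b : F) (f : ℕ → F) (m : ℕ) (h : m % 4 = 2) : sigP b f m = f m := by
  unfold sigP
  rw [if_neg (by omega), if_neg (by omega), if_neg (by omega), if_neg (by omega),
    if_neg (by omega), if_neg (by omega)]

lemma sigL_0 (b : F) (f : ℕ → F) : sigL b f 0 = f 0 + b := by unfold sigL; rw [if_pos rfl]
lemma sigL_3 (b : F) (f : ℕ → F) : sigL b f 3 = f 3 - b * f 1 := by
  unfold sigL; rw [if_neg (by omega), if_pos rfl]
lemma sigL_13 (b : F) (f : ℕ → F) (m : ℕ) (h : m % 4 = 1 ∨ m % 4 = 3) (h5 : 5 ≤ m) :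
    sigL b f m = f m - b * f (m-3) := by
  unfold sigL; rw [if_neg (by omega), if_neg (by omega), if_pos ⟨h5, h⟩]
lemma sigL_else (b : F) (f : ℕ → F) (m : ℕ)
    (h : m ≠ 0 ∧ m ≠ 3 ∧ ¬(5 ≤ m ∧ (m % 4 = 1 ∨ m % 4 = 3))) : sigL b f m = f m := by
  unfold sigL; rw [if_neg h.1, if_neg h.2.1, if_neg h.2.2]

lemma sig_P_tri (b : F) : ∀ f g : ℕ → F, ∀ m, (∀ i, i < m → f i = g i) →
    sigP b f m - f m = sigP b g m - g m := by
  intro f g m hfg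
  unfold sigP
  split_ifs with h1 h2 h3 h4 h5 h6
  · subst h1; ring
  · subst h2; rw [hfg 0 (by omega)]; ring
  · subst h3; rw [hfg 0 (by omega), hfg 1 (by omega)]; ring
  · rw [hfg (m-2) (by omega)]; ring
  · rw [hfg (m-3) (by omega)]; ring
  · rw [hfg (m-3) (by omega), hfg (m-2) (by omega), hfg (m-5) (by omega)]; ring
  · ring

lemma sig_L_tri (b : F) : ∀ f g : ℕ → F, ∀ m, (∀ i, i < m → f i = g i) →
    sigL b f m - f m = sigL b g m - g m := by
  intro f g m hfg
  unfold sigL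
  split_ifs with h1 h2 h3
  · subst h1; ring
  · subst h2; rw [hfg 1 (by omega)]; ring
  · rw [hfg (m-3) (by omega)]; ring
  · ring

lemma sig_inc (b : F) : ∀ p l : ℕ → F, ∀ m, 1 ≤ m →
    (∀ i, 1 ≤ i → i ≤ m → eqn p l i) → eqn (sigP b p) (sigL b l) m := by
  intro p l m h1 hE
  unfold eqn at *
  rcases Nat.lt_or_ge m 6 with hm | hm
  · interval_cases m
    · have E1 := hE 1 (by omega) (by omega); rw [rhsD_one] at E1
      rw [rhsD_one, sigL_else b l 1 (by omega), sigP_1, sigL_0, sigP_0]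
      linear_combination E1
    · have E2 := hE 2 (by omega) (by omega); rw [rhsD_two] at E2
      rw [rhsD_two, sigL_else b l 2 (by omega), sigP_r2 b p 2 (by omega),
        sigL_else b l 1 (by omega), sigP_0]
      linear_combination E2
    · have E1 := hE 1 (by omega) (by omega); rw [rhsD_one] at E1
      have E3 := hE 3 (by omega) (by omega); rw [rhsD_03 p l 3 (by omega) (by omega)] at E3
      rw [rhsD_03 _ _ 3 (by omega) (by omega), sigL_3, sigP_3, sigL_0, sigP_1]
      norm_num
      linear_combination E3 - b * E1
    · have E4 := hE 4 (by omega) (by omega); rw [rhsD_03 p l 4 (by omega) (by omega)] at E4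
      rw [rhsD_03 _ _ 4 (by omega) (by omega), sigL_else b l 4 (by omega),
        sigP_r0 b p 4 (by omega) (by omega), sigL_0, sigP_r2 b p 2 (by omega)]
      norm_num
      linear_combination E4
    · have E2 := hE 2 (by omega) (by omega); rw [rhsD_two] at E2
      have E5 := hE 5 (by omega) (by omega); rw [rhsD_12 p l 5 (by omega) (by omega)] at E5
      rw [rhsD_12 _ _ 5 (by omega) (by omega), sigL_13 b l 5 (by omega) (by omega),
        sigP_r1 b p 5 (by omega) (by omega), sigL_3, sigP_0]
      norm_num
      linear_combination E5 - b * E2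
  · have hr : m % 4 = 0 ∨ m % 4 = 1 ∨ m % 4 = 2 ∨ m % 4 = 3 := by omega
    have Em := hE m (by omega) le_rfl
    rcases hr with hr | hr | hr | hr
    · -- m % 4 = 0, m ≥ 8
      rw [rhsD_03 p l m (by omega) (by omega)] at Em
      rw [rhsD_03 _ _ m (by omega) (by omega), sigL_else b l m (by omega),
        sigP_r0 b p m hr (by omega), sigL_0, sigP_r2 b p (m-2) (by omega)]
      linear_combination Em
    · -- m % 4 = 1, m ≥ 9
      have Em3 := hE (m-3) (by omega) (by omega)
      rw [rhsD_12 p l m (by omega) (by omega)] at Em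
      rw [rhsD_12 p l (m-3) (by omega) (by omega)] at Em3
      have i1 : m - 3 - 2 = m - 5 := by omega
      rw [i1] at Em3
      rw [rhsD_12 _ _ m (by omega) (by omega), sigL_13 b l m (by omega) (by omega),
        sigP_r1 b p m hr (by omega), sigL_13 b l (m-2) (by omega) (by omega), sigP_0]
      have i2 : m - 2 - 3 = m - 5 := by omega
      rw [i2]
      linear_combination Em - b * Em3
    · -- m % 4 = 2, m ≥ 6
      rw [rhsD_12 p l m (by omega) (by omega)] at Em
      rw [rhsD_12 _ _ m (by omega) (by omega), sigL_else b l m (by omega),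
        sigP_r2 b p m hr, sigL_else b l (m-2) (by omega), sigP_0]
      linear_combination Em
    · -- m % 4 = 3, m ≥ 7
      have Em3 := hE (m-3) (by omega) (by omega)
      rw [rhsD_03 p l m (by omega) (by omega)] at Em
      rw [rhsD_03 p l (m-3) (by omega) (by omega)] at Em3
      have i1 : m - 3 - 2 = m - 5 := by omega
      rw [i1] at Em3
      rw [rhsD_03 _ _ m (by omega) (by omega), sigL_13 b l m (by omega) (by omega),
        sigP_r3 b p m hr (by omega), sigL_0, sigP_r1 b p (m-2) (by omega) (by omega)]
      have i2 : m - 2 - 3 = m - 5 := by omega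
      rw [i2]
      linear_combination Em - b * Em3

def sigFam (b : F) : Fam F :=
  ⟨sigP b, sigL b, sig_P_tri b, sig_L_tri b, sig_inc b⟩

end DProof
namespace DProof
variable {F : Type} [Field F]

/-! ### The family Δ₁(c): translate coordinate 1 -/

def del1P (c : F) (f : ℕ → F) : ℕ → F := fun m =>
  if m = 1 then f 1 + c
  else if m = 2 then f 2 - c * f 0
  else if m = 4 then f 4 - c * f 1
  else if 5 ≤ m ∧ m % 2 = 1 then f m + c * f (m-4)
  else if 6 ≤ m ∧ m % 2 = 0 then f m - c * f (m-4)
  else f m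

def del1L (c : F) (f : ℕ → F) : ℕ → F := fun m =>
  if m = 1 then f 1 + c
  else if m = 3 then f 3 + c * f 0
  else if m = 4 then f 4 - c * f 1
  else if 5 ≤ m ∧ m % 2 = 1 then f m + c * f (m-4)
  else if 6 ≤ m ∧ m % 2 = 0 then f m - c * f (m-4)
  else f m

lemma del1P_1 (c : F) (f : ℕ → F) : del1P c f 1 = f 1 + c := by
  unfold del1P; rw [if_pos rfl]
lemma del1P_2 (c : F) (f : ℕ → F) : del1P c f 2 = f 2 - c * f 0 := by
  unfold del1P; rw [if_neg (by omega), if_pos rfl]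
lemma del1P_4 (c : F) (f : ℕ → F) : del1P c f 4 = f 4 - c * f 1 := by
  unfold del1P; rw [if_neg (by omega), if_neg (by omega), if_pos rfl]
lemma del1P_odd (c : F) (f : ℕ → F) (m : ℕ) (h5 : 5 ≤ m) (h2 : m % 2 = 1) :
    del1P c f m = f m + c * f (m-4) := by
  unfold del1P
  rw [if_neg (by omega), if_neg (by omega), if_neg (by omega), if_pos ⟨h5, h2⟩]
lemma del1P_even (c : F) (f : ℕ → F) (m : ℕ) (h6 : 6 ≤ m) (h2 : m % 2 = 0) :
    del1P c f m = f m - c * f (m-4) := by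
  unfold del1P
  rw [if_neg (by omega), if_neg (by omega), if_neg (by omega), if_neg (by omega),
    if_pos ⟨h6, h2⟩]
lemma del1P_else (c : F) (f : ℕ → F) (m : ℕ) (h : m = 0 ∨ m = 3) :
    del1P c f m = f m := by
  unfold del1P
  rw [if_neg (by omega), if_neg (by omega), if_neg (by omega), if_neg (by omega),
    if_neg (by omega)]

lemma del1L_1 (c : F) (f : ℕ → F) : del1L c f 1 = f 1 + c := by
  unfold del1L; rw [if_pos rfl]
lemma del1L_3 (c : F) (f : ℕ → F) : del1L c f 3 = f 3 + c * f 0 := by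
  unfold del1L; rw [if_neg (by omega), if_pos rfl]
lemma del1L_4 (c : F) (f : ℕ → F) : del1L c f 4 = f 4 - c * f 1 := by
  unfold del1L; rw [if_neg (by omega), if_neg (by omega), if_pos rfl]
lemma del1L_odd (c : F) (f : ℕ → F) (m : ℕ) (h5 : 5 ≤ m) (h2 : m % 2 = 1) :
    del1L c f m = f m + c * f (m-4) := by
  unfold del1L
  rw [if_neg (by omega), if_neg (by omega), if_neg (by omega), if_pos ⟨h5, h2⟩]
lemma del1L_even (c : F) (f : ℕ → F) (m : ℕ) (h6 : 6 ≤ m) (h2 : m % 2 = 0) :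
    del1L c f m = f m - c * f (m-4) := by
  unfold del1L
  rw [if_neg (by omega), if_neg (by omega), if_neg (by omega), if_neg (by omega),
    if_pos ⟨h6, h2⟩]
lemma del1L_else (c : F) (f : ℕ → F) (m : ℕ) (h : m = 0 ∨ m = 2) :
    del1L c f m = f m := by
  unfold del1L
  rw [if_neg (by omega), if_neg (by omega), if_neg (by omega), if_neg (by omega),
    if_neg (by omega)]

lemma del1_P_tri (c : F) : ∀ f g : ℕ → F, ∀ m, (∀ i, i < m → f i = g i) →
    del1P c f m - f m = del1P c g m - g m := by
  intro f g m hfg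
  unfold del1P
  split_ifs with h1 h2 h3 h4 h5
  · subst h1; ring
  · subst h2; rw [hfg 0 (by omega)]; ring
  · subst h3; rw [hfg 1 (by omega)]; ring
  · rw [hfg (m-4) (by omega)]; ring
  · rw [hfg (m-4) (by omega)]; ring
  · ring

lemma del1_L_tri (c : F) : ∀ f g : ℕ → F, ∀ m, (∀ i, i < m → f i = g i) →
    del1L c f m - f m = del1L c g m - g m := by
  intro f g m hfg
  unfold del1L
  split_ifs with h1 h2 h3 h4 h5
  · subst h1; ring
  · subst h2; rw [hfg 0 (by omega)]; ring
  · subst h3; rw [hfg 1 (by omega)]; ring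
  · rw [hfg (m-4) (by omega)]; ring
  · rw [hfg (m-4) (by omega)]; ring
  · ring

lemma del1_inc (c : F) : ∀ p l : ℕ → F, ∀ m, 1 ≤ m →
    (∀ i, 1 ≤ i → i ≤ m → eqn p l i) → eqn (del1P c p) (del1L c l) m := by
  intro p l m h1 hE
  unfold eqn at *
  rcases Nat.lt_or_ge m 7 with hm | hm
  · interval_cases m
    · have E1 := hE 1 (by omega) (by omega); rw [rhsD_one] at E1
      rw [rhsD_one, del1L_1, del1P_1, del1L_else c l 0 (by omega), del1P_else c p 0 (by omega)]
      linear_combination E1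
    · have E2 := hE 2 (by omega) (by omega); rw [rhsD_two] at E2
      rw [rhsD_two, del1L_else c l 2 (by omega), del1P_2, del1L_1, del1P_else c p 0 (by omega)]
      linear_combination E2
    · have E3 := hE 3 (by omega) (by omega); rw [rhsD_03 p l 3 (by omega) (by omega)] at E3
      rw [rhsD_03 _ _ 3 (by omega) (by omega), del1L_3, del1P_else c p 3 (by omega),
        del1L_else c l 0 (by omega), del1P_1]
      norm_num
      linear_combination E3
    · have E1 := hE 1 (by omega) (by omega); rw [rhsD_one] at E1
      have E4 := hE 4 (by omega) (by omega); rw [rhsD_03 p l 4 (by omega) (by omega)] at E4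
      rw [rhsD_03 _ _ 4 (by omega) (by omega), del1L_4, del1P_4,
        del1L_else c l 0 (by omega), del1P_2]
      norm_num
      linear_combination E4 - c * E1
    · have E1 := hE 1 (by omega) (by omega); rw [rhsD_one] at E1
      have E5 := hE 5 (by omega) (by omega); rw [rhsD_12 p l 5 (by omega) (by omega)] at E5
      rw [rhsD_12 _ _ 5 (by omega) (by omega), del1L_odd c l 5 (by omega) (by omega),
        del1P_odd c p 5 (by omega) (by omega), del1L_3, del1P_else c p 0 (by omega)]
      norm_num
      linear_combination E5 + c * E1
    · have E2 := hE 2 (by omega) (by omega); rw [rhsD_two] at E2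
      have E6 := hE 6 (by omega) (by omega); rw [rhsD_12 p l 6 (by omega) (by omega)] at E6
      rw [rhsD_12 _ _ 6 (by omega) (by omega), del1L_even c l 6 (by omega) (by omega),
        del1P_even c p 6 (by omega) (by omega), del1L_4, del1P_else c p 0 (by omega)]
      norm_num
      linear_combination E6 - c * E2
  · have Em := hE m (by omega) le_rfl
    have Em4 := hE (m-4) (by omega) (by omega)
    have i1 : m - 4 - 2 = m - 6 := by omega
    have i2 : m - 2 - 4 = m - 6 := by omega
    have hr : m % 4 = 0 ∨ m % 4 = 1 ∨ m % 4 = 2 ∨ m % 4 = 3 := by omega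
    rcases hr with hr | hr | hr | hr
    · -- m % 4 = 0, m ≥ 8 ; even; E(m-4) type 03
      rw [rhsD_03 p l m (by omega) (by omega)] at Em
      rw [rhsD_03 p l (m-4) (by omega) (by omega), i1] at Em4
      rw [rhsD_03 _ _ m (by omega) (by omega), del1L_even c l m (by omega) (by omega),
        del1P_even c p m (by omega) (by omega), del1L_else c l 0 (by omega),
        del1P_even c p (m-2) (by omega) (by omega), i2]
      linear_combination Em - c * Em4
    · -- m % 4 = 1, m ≥ 9 ; odd; type 12
      rw [rhsD_12 p l m (by omega) (by omega)] at Em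
      rw [rhsD_12 p l (m-4) (by omega) (by omega), i1] at Em4
      rw [rhsD_12 _ _ m (by omega) (by omega), del1L_odd c l m (by omega) (by omega),
        del1P_odd c p m (by omega) (by omega), del1L_odd c l (m-2) (by omega) (by omega),
        del1P_else c p 0 (by omega), i2]
      linear_combination Em + c * Em4
    · -- m % 4 = 2, m ≥ 10 ; even; type 12
      rw [rhsD_12 p l m (by omega) (by omega)] at Em
      rw [rhsD_12 p l (m-4) (by omega) (by omega), i1] at Em4
      rw [rhsD_12 _ _ m (by omega) (by omega), del1L_even c l m (by omega) (by omega),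
        del1P_even c p m (by omega) (by omega), del1L_even c l (m-2) (by omega) (by omega),
        del1P_else c p 0 (by omega), i2]
      linear_combination Em - c * Em4
    · -- m % 4 = 3, m ≥ 7 ; odd; type 03
      rw [rhsD_03 p l m (by omega) (by omega)] at Em
      rw [rhsD_03 p l (m-4) (by omega) (by omega), i1] at Em4
      rw [rhsD_03 _ _ m (by omega) (by omega), del1L_odd c l m (by omega) (by omega),
        del1P_odd c p m (by omega) (by omega), del1L_else c l 0 (by omega),
        del1P_odd c p (m-2) (by omega) (by omega), i2]
      linear_combination Em + c * Em4

def del1Fam (c : F) : Fam F :=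
  ⟨del1P c, del1L c, del1_P_tri c, del1_L_tri c, del1_inc c⟩

end DProof
namespace DProof
variable {F : Type} [Field F]

/-! ### The family Δ_A(j,c): translate coordinate j, for j ≥ 2 with j % 4 ∈ {1,2} -/

def dAP (j : ℕ) (c : F) (f : ℕ → F) : ℕ → F := fun m =>
  if m = j then f m + c
  else if j + 4 ≤ m ∧ m % 2 = j % 2 then f m + c * f (m - j - 3)
  else f m

def dAL (j : ℕ) (c : F) (f : ℕ → F) : ℕ → F := fun m =>
  if m = j then f m + c
  else if m = j + 2 then f m + c * f 0
  else if j + 4 ≤ m ∧ m % 2 = j % 2 then f m + c * f (m - j - 3)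
  else f m

lemma dAP_j (j : ℕ) (c : F) (f : ℕ → F) : dAP j c f j = f j + c := by
  unfold dAP; rw [if_pos rfl]
lemma dAP_hi (j : ℕ) (c : F) (f : ℕ → F) (m : ℕ) (h : j + 4 ≤ m ∧ m % 2 = j % 2) :
    dAP j c f m = f m + c * f (m - j - 3) := by
  unfold dAP; rw [if_neg (by omega), if_pos h]
lemma dAP_else (j : ℕ) (c : F) (f : ℕ → F) (m : ℕ)
    (h : m ≠ j ∧ ¬(j + 4 ≤ m ∧ m % 2 = j % 2)) : dAP j c f m = f m := by
  unfold dAP; rw [if_neg h.1, if_neg h.2]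

lemma dAL_j (j : ℕ) (c : F) (f : ℕ → F) : dAL j c f j = f j + c := by
  unfold dAL; rw [if_pos rfl]
lemma dAL_j2 (j : ℕ) (c : F) (f : ℕ → F) : dAL j c f (j+2) = f (j+2) + c * f 0 := by
  unfold dAL; rw [if_neg (by omega), if_pos rfl]
lemma dAL_hi (j : ℕ) (c : F) (f : ℕ → F) (m : ℕ) (h : j + 4 ≤ m ∧ m % 2 = j % 2) :
    dAL j c f m = f m + c * f (m - j - 3) := by
  unfold dAL; rw [if_neg (by omega), if_neg (by omega), if_pos h]
lemma dAL_else (j : ℕ) (c : F) (f : ℕ → F) (m : ℕ)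
    (h : m ≠ j ∧ m ≠ j + 2 ∧ ¬(j + 4 ≤ m ∧ m % 2 = j % 2)) : dAL j c f m = f m := by
  unfold dAL; rw [if_neg h.1, if_neg h.2.1, if_neg h.2.2]

lemma dA_P_tri (j : ℕ) (c : F) : ∀ f g : ℕ → F, ∀ m, (∀ i, i < m → f i = g i) →
    dAP j c f m - f m = dAP j c g m - g m := by
  intro f g m hfg
  unfold dAP
  split_ifs with h1 h2
  · ring
  · rw [hfg (m - j - 3) (by omega)]; ring
  · ring

lemma dA_L_tri (j : ℕ) (c : F) (hj : 2 ≤ j) :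
    ∀ f g : ℕ → F, ∀ m, (∀ i, i < m → f i = g i) →
    dAL j c f m - f m = dAL j c g m - g m := by
  intro f g m hfg
  unfold dAL
  split_ifs with h1 h2 h3
  · ring
  · rw [hfg 0 (by omega)]; ring
  · rw [hfg (m - j - 3) (by omega)]; ring
  · ring

lemma dA_inc (j : ℕ) (c : F) (hj2 : 2 ≤ j) (hj4 : j % 4 = 1 ∨ j % 4 = 2) :
    ∀ p l : ℕ → F, ∀ m, 1 ≤ m →
    (∀ i, 1 ≤ i → i ≤ m → eqn p l i) → eqn (dAP j c p) (dAL j c l) m := by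
  intro p l m h1 hE
  unfold eqn at *
  by_cases hb : m = j
  · -- m = j
    subst hb
    have Em := hE m (by omega) le_rfl
    rw [dAL_j, dAP_j]
    by_cases h2 : m = 2
    · subst h2
      rw [rhsD_two] at Em
      rw [rhsD_two, dAL_else 2 c l 1 (by omega), dAP_else 2 c p 0 (by omega)]
      linear_combination Em
    · have h5 : 5 ≤ m := by omega
      rw [rhsD_12 p l m (by omega) (by omega)] at Em
      rw [rhsD_12 _ _ m (by omega) (by omega), dAL_else m c l (m-2) (by omega),
        dAP_else m c p 0 (by omega)]
      linear_combination Em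
  by_cases hc : m = j + 2
  · -- m = j + 2
    subst hc
    have Em := hE (j+2) (by omega) le_rfl
    have i1 : j + 2 - 2 = j := by omega
    rw [rhsD_03 p l (j+2) (by omega) (by omega), i1] at Em
    rw [rhsD_03 _ _ (j+2) (by omega) (by omega), i1, dAL_j2, dAP_j,
      dAP_else j c p (j+2) (by omega), dAL_else j c l 0 (by omega)]
    linear_combination Em
  by_cases hd : m = j + 4
  · -- m = j + 4
    subst hd
    have Em := hE (j+4) (by omega) le_rfl
    have E1 := hE 1 (by omega) (by omega); rw [rhsD_one] at E1
    have i1 : j + 4 - 2 = j + 2 := by omega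
    have i2 : j + 4 - j - 3 = 1 := by omega
    rw [rhsD_12 p l (j+4) (by omega) (by omega), i1] at Em
    rw [rhsD_12 _ _ (j+4) (by omega) (by omega), i1, dAL_hi j c l (j+4) (by omega),
      dAP_hi j c p (j+4) (by omega), i2, dAL_j2, dAP_else j c p 0 (by omega)]
    linear_combination Em + c * E1
  by_cases he : j + 6 ≤ m ∧ m % 2 = j % 2
  · -- general high case
    have Em := hE m (by omega) le_rfl
    have Ei := hE (m - j - 3) (by omega) (by omega)
    have i3 : m - 2 - j - 3 = m - j - 5 := by omega
    have i4 : m - j - 3 - 2 = m - j - 5 := by omega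
    by_cases ht : m % 4 = 0 ∨ m % 4 = 3
    · rw [rhsD_03 p l m (by omega) ht] at Em
      rw [rhsD_03 p l (m - j - 3) (by omega) (by omega), i4] at Ei
      rw [rhsD_03 _ _ m (by omega) ht, dAL_hi j c l m (by omega),
        dAP_hi j c p m (by omega), dAP_hi j c p (m-2) (by omega), i3,
        dAL_else j c l 0 (by omega)]
      linear_combination Em + c * Ei
    · rw [rhsD_12 p l m (by omega) (by omega)] at Em
      rw [rhsD_12 p l (m - j - 3) (by omega) (by omega), i4] at Ei
      rw [rhsD_12 _ _ m (by omega) (by omega), dAL_hi j c l m (by omega),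
        dAP_hi j c p m (by omega), dAL_hi j c l (m-2) (by omega), i3,
        dAP_else j c p 0 (by omega)]
      linear_combination Em + c * Ei
  -- no corrections
  have Em := hE m (by omega) le_rfl
  have hLm : dAL j c l m = l m := dAL_else j c l m (by omega)
  have hPm : dAP j c p m = p m := dAP_else j c p m (by omega)
  match m, h1 with
  | 1, _ =>
    rw [rhsD_one] at Em
    rw [rhsD_one, hLm, hPm, dAL_else j c l 0 (by omega), dAP_else j c p 0 (by omega)]
    linear_combination Em
  | 2, _ =>
    rw [rhsD_two] at Em
    rw [rhsD_two, hLm, hPm, dAL_else j c l 1 (by omega), dAP_else j c p 0 (by omega)]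
    linear_combination Em
  | (n+3), _ =>
    by_cases ht : (n+3) % 4 = 0 ∨ (n+3) % 4 = 3
    · rw [rhsD_03 p l (n+3) (by omega) ht] at Em
      rw [rhsD_03 _ _ (n+3) (by omega) ht, hLm, hPm, dAL_else j c l 0 (by omega),
        dAP_else j c p (n+3-2) (by omega)]
      linear_combination Em
    · rw [rhsD_12 p l (n+3) (by omega) (by omega)] at Em
      rw [rhsD_12 _ _ (n+3) (by omega) (by omega), hLm, hPm,
        dAL_else j c l (n+3-2) (by omega), dAP_else j c p 0 (by omega)]
      linear_combination Em

def dAFam (j : ℕ) (c : F) (hj2 : 2 ≤ j) (hj4 : j % 4 = 1 ∨ j % 4 = 2) : Fam F :=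
  ⟨dAP j c, dAL j c, dA_P_tri j c, dA_L_tri j c hj2, dA_inc j c hj2 hj4⟩

end DProof
namespace DProof
variable {F : Type} [Field F]

/-! ### The family Δ_B(j,c): translate coordinate j, for j ≥ 3 with j % 4 ∈ {3,0} -/

def dBP (j : ℕ) (c : F) (f : ℕ → F) : ℕ → F := fun m =>
  if m = j then f m + c
  else if m = j + 2 then f m - c * f 0
  else if m = j + 4 then f m - c * f 1
  else if j + 6 ≤ m ∧ m % 2 = j % 2 then f m - c * f (m - j - 4)
  else f m

def dBL (j : ℕ) (c : F) (f : ℕ → F) : ℕ → F := fun m =>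
  if m = j then f m + c
  else if m = j + 4 then f m - c * f 1
  else if j + 6 ≤ m ∧ m % 2 = j % 2 then f m - c * f (m - j - 4)
  else f m

lemma dBP_j (j : ℕ) (c : F) (f : ℕ → F) : dBP j c f j = f j + c := by
  unfold dBP; rw [if_pos rfl]
lemma dBP_j2 (j : ℕ) (c : F) (f : ℕ → F) : dBP j c f (j+2) = f (j+2) - c * f 0 := by
  unfold dBP; rw [if_neg (by omega), if_pos rfl]
lemma dBP_j4 (j : ℕ) (c : F) (f : ℕ → F) : dBP j c f (j+4) = f (j+4) - c * f 1 := by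
  unfold dBP; rw [if_neg (by omega), if_neg (by omega), if_pos rfl]
lemma dBP_hi (j : ℕ) (c : F) (f : ℕ → F) (m : ℕ) (h : j + 6 ≤ m ∧ m % 2 = j % 2) :
    dBP j c f m = f m - c * f (m - j - 4) := by
  unfold dBP; rw [if_neg (by omega), if_neg (by omega), if_neg (by omega), if_pos h]
lemma dBP_else (j : ℕ) (c : F) (f : ℕ → F) (m : ℕ)
    (h : m ≠ j ∧ m ≠ j + 2 ∧ m ≠ j + 4 ∧ ¬(j + 6 ≤ m ∧ m % 2 = j % 2)) :
    dBP j c f m = f m := by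
  unfold dBP; rw [if_neg h.1, if_neg h.2.1, if_neg h.2.2.1, if_neg h.2.2.2]

lemma dBL_j (j : ℕ) (c : F) (f : ℕ → F) : dBL j c f j = f j + c := by
  unfold dBL; rw [if_pos rfl]
lemma dBL_j4 (j : ℕ) (c : F) (f : ℕ → F) : dBL j c f (j+4) = f (j+4) - c * f 1 := by
  unfold dBL; rw [if_neg (by omega), if_pos rfl]
lemma dBL_hi (j : ℕ) (c : F) (f : ℕ → F) (m : ℕ) (h : j + 6 ≤ m ∧ m % 2 = j % 2) :
    dBL j c f m = f m - c * f (m - j - 4) := by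
  unfold dBL; rw [if_neg (by omega), if_neg (by omega), if_pos h]
lemma dBL_else (j : ℕ) (c : F) (f : ℕ → F) (m : ℕ)
    (h : m ≠ j ∧ m ≠ j + 4 ∧ ¬(j + 6 ≤ m ∧ m % 2 = j % 2)) : dBL j c f m = f m := by
  unfold dBL; rw [if_neg h.1, if_neg h.2.1, if_neg h.2.2]

lemma dB_P_tri (j : ℕ) (c : F) (hj : 3 ≤ j) :
    ∀ f g : ℕ → F, ∀ m, (∀ i, i < m → f i = g i) →
    dBP j c f m - f m = dBP j c g m - g m := by
  intro f g m hfg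
  unfold dBP
  split_ifs with h1 h2 h3 h4
  · ring
  · rw [hfg 0 (by omega)]; ring
  · rw [hfg 1 (by omega)]; ring
  · rw [hfg (m - j - 4) (by omega)]; ring
  · ring

lemma dB_L_tri (j : ℕ) (c : F) (hj : 3 ≤ j) :
    ∀ f g : ℕ → F, ∀ m, (∀ i, i < m → f i = g i) →
    dBL j c f m - f m = dBL j c g m - g m := by
  intro f g m hfg
  unfold dBL
  split_ifs with h1 h2 h3
  · ring
  · rw [hfg 1 (by omega)]; ring
  · rw [hfg (m - j - 4) (by omega)]; ring
  · ring

lemma dB_inc (j : ℕ) (c : F) (hj3 : 3 ≤ j) (hj4 : j % 4 = 3 ∨ j % 4 = 0) :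
    ∀ p l : ℕ → F, ∀ m, 1 ≤ m →
    (∀ i, 1 ≤ i → i ≤ m → eqn p l i) → eqn (dBP j c p) (dBL j c l) m := by
  intro p l m h1 hE
  unfold eqn at *
  by_cases hb : m = j
  · subst hb
    have Em := hE m (by omega) le_rfl
    rw [rhsD_03 p l m (by omega) (by omega)] at Em
    rw [rhsD_03 _ _ m (by omega) (by omega), dBL_j, dBP_j,
      dBL_else m c l 0 (by omega), dBP_else m c p (m-2) (by omega)]
    linear_combination Em
  by_cases hc : m = j + 2
  · subst hc
    have Em := hE (j+2) (by omega) le_rfl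
    have i1 : j + 2 - 2 = j := by omega
    rw [rhsD_12 p l (j+2) (by omega) (by omega), i1] at Em
    rw [rhsD_12 _ _ (j+2) (by omega) (by omega), i1, dBL_j, dBP_j2,
      dBL_else j c l (j+2) (by omega), dBP_else j c p 0 (by omega)]
    linear_combination Em
  by_cases hd : m = j + 4
  · subst hd
    have Em := hE (j+4) (by omega) le_rfl
    have E1 := hE 1 (by omega) (by omega); rw [rhsD_one] at E1
    have i1 : j + 4 - 2 = j + 2 := by omega
    rw [rhsD_03 p l (j+4) (by omega) (by omega), i1] at Em
    rw [rhsD_03 _ _ (j+4) (by omega) (by omega), i1, dBL_j4, dBP_j4, dBP_j2,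
      dBL_else j c l 0 (by omega)]
    linear_combination Em - c * E1
  by_cases he : m = j + 6
  · subst he
    have Em := hE (j+6) (by omega) le_rfl
    have E2 := hE 2 (by omega) (by omega); rw [rhsD_two] at E2
    have i1 : j + 6 - 2 = j + 4 := by omega
    have i2 : j + 6 - j - 4 = 2 := by omega
    rw [rhsD_12 p l (j+6) (by omega) (by omega), i1] at Em
    rw [rhsD_12 _ _ (j+6) (by omega) (by omega), i1, dBL_hi j c l (j+6) (by omega),
      dBP_hi j c p (j+6) (by omega), i2, dBL_j4, dBP_else j c p 0 (by omega)]
    linear_combination Em - c * E2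
  by_cases hf : j + 8 ≤ m ∧ m % 2 = j % 2
  · have Em := hE m (by omega) le_rfl
    have Ei := hE (m - j - 4) (by omega) (by omega)
    have i3 : m - 2 - j - 4 = m - j - 6 := by omega
    have i4 : m - j - 4 - 2 = m - j - 6 := by omega
    by_cases ht : m % 4 = 0 ∨ m % 4 = 3
    · rw [rhsD_03 p l m (by omega) ht] at Em
      rw [rhsD_03 p l (m - j - 4) (by omega) (by omega), i4] at Ei
      rw [rhsD_03 _ _ m (by omega) ht, dBL_hi j c l m (by omega),
        dBP_hi j c p m (by omega), dBP_hi j c p (m-2) (by omega), i3,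
        dBL_else j c l 0 (by omega)]
      linear_combination Em - c * Ei
    · rw [rhsD_12 p l m (by omega) (by omega)] at Em
      rw [rhsD_12 p l (m - j - 4) (by omega) (by omega), i4] at Ei
      rw [rhsD_12 _ _ m (by omega) (by omega), dBL_hi j c l m (by omega),
        dBP_hi j c p m (by omega), dBL_hi j c l (m-2) (by omega), i3,
        dBP_else j c p 0 (by omega)]
      linear_combination Em - c * Ei
  -- no corrections
  have Em := hE m (by omega) le_rfl
  have hLm : dBL j c l m = l m := dBL_else j c l m (by omega)
  have hPm : dBP j c p m = p m := dBP_else j c p m (by omega)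
  match m, h1 with
  | 1, _ =>
    rw [rhsD_one] at Em
    rw [rhsD_one, hLm, hPm, dBL_else j c l 0 (by omega), dBP_else j c p 0 (by omega)]
    linear_combination Em
  | 2, _ =>
    rw [rhsD_two] at Em
    rw [rhsD_two, hLm, hPm, dBL_else j c l 1 (by omega), dBP_else j c p 0 (by omega)]
    linear_combination Em
  | (n+3), _ =>
    by_cases ht : (n+3) % 4 = 0 ∨ (n+3) % 4 = 3
    · rw [rhsD_03 p l (n+3) (by omega) ht] at Em
      rw [rhsD_03 _ _ (n+3) (by omega) ht, hLm, hPm, dBL_else j c l 0 (by omega),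
        dBP_else j c p (n+3-2) (by omega)]
      linear_combination Em
    · rw [rhsD_12 p l (n+3) (by omega) (by omega)] at Em
      rw [rhsD_12 _ _ (n+3) (by omega) (by omega), hLm, hPm,
        dBL_else j c l (n+3-2) (by omega), dBP_else j c p 0 (by omega)]
      linear_combination Em

def dBFam (j : ℕ) (c : F) (hj3 : 3 ≤ j) (hj4 : j % 4 = 3 ∨ j % 4 = 0) : Fam F :=
  ⟨dBP j c, dBL j c, dB_P_tri j c hj3, dB_L_tri j c hj3, dB_inc j c hj3 hj4⟩

end DProof
namespace DProof
variable {F : Type} [Field F]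

/-! ### action lemmas for the Δ families -/

lemma del1_PL (c : F) (f : ℕ → F) (h0 : f 0 = 0) : ∀ m, del1P c f m = del1L c f m := by
  intro m; unfold del1P del1L
  split_ifs <;> first | rfl | (exfalso; omega) | (subst_vars; first | rfl | (rw [h0]; ring) | ring)

lemma dA_PL (j : ℕ) (c : F) (f : ℕ → F) (h0 : f 0 = 0) :
    ∀ m, dAP j c f m = dAL j c f m := by
  intro m; unfold dAP dAL
  split_ifs <;> first | rfl | (exfalso; omega) | (subst_vars; first | rfl | (rw [h0]; ring) | ring)

lemma dB_PL (j : ℕ) (c : F) (f : ℕ → F) (h0 : f 0 = 0) :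
    ∀ m, dBP j c f m = dBL j c f m := by
  intro m; unfold dBP dBL
  split_ifs <;> first | rfl | (exfalso; omega) | (subst_vars; first | rfl | (rw [h0]; ring) | ring)

variable {k : ℕ} [Fintype F]

lemma mapP_apply (A : Fam F) (v : Fin k → F) (i : Fin k) :
    A.mapP v i = A.P (extD v) i := rfl
lemma mapL_apply (A : Fam F) (v : Fin k → F) (i : Fin k) :
    A.mapL v i = A.L (extD v) i := rfl

/-- The greedy reduction: a vector with `v 0 = 0` can be moved to `0`
simultaneously as a point and as a line. -/
lemma reduce_diag (hk : 2 ≤ k) :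
    ∀ n j, ∀ v : Fin k → F, k ≤ j + n → 1 ≤ j →
    (∀ i : Fin k, (i : ℕ) < j → v i = 0) →
    ∃ φ : DGraph k F ≃g DGraph k F,
      φ (Sum.inl v) = Sum.inl 0 ∧ φ (Sum.inr v) = Sum.inr 0 := by
  intro n
  induction n with
  | zero =>
    intro j v hkj hj hv
    have hv0 : v = 0 := funext fun i => hv i (by have := i.isLt; omega)
    subst hv0
    exact ⟨RelIso.refl _, rfl, rfl⟩
  | succ n ih =>
    intro j v hkj hj hv
    by_cases hjk : k ≤ j
    · have hv0 : v = 0 := funext fun i => hv i (by have := i.isLt; omega)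
      subst hv0
      exact ⟨RelIso.refl _, rfl, rfl⟩
    · push_neg at hjk
      set c : F := -(v ⟨j, hjk⟩) with hc
      have hv0 : extD v 0 = 0 := by
        rw [extD_lt v 0 (by omega)]
        exact hv _ (by show 0 < j; omega)
      have hvj : extD v j = v ⟨j, hjk⟩ := extD_lt v j hjk
      -- choose the family according to j
      obtain ⟨A, hPL, hlow, hat⟩ :
          ∃ A : Fam F, (∀ m, A.P (extD v) m = A.L (extD v) m) ∧
            (∀ m, m < j → A.P (extD v) m = extD v m) ∧
            (A.P (extD v) j = extD v j + c) := by
        rcases Nat.lt_or_ge j 2 with h2 | h2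
        · have hj1 : j = 1 := by omega
          subst hj1
          exact ⟨del1Fam c, del1_PL c _ hv0,
            fun m hm => del1P_else c _ m (by omega), del1P_1 c _⟩
        · by_cases h4 : j % 4 = 1 ∨ j % 4 = 2
          · exact ⟨dAFam j c h2 h4, dA_PL j c _ hv0,
              fun m hm => dAP_else j c _ m (by omega), dAP_j j c _⟩
          · exact ⟨dBFam j c (by omega) (by omega), dB_PL j c _ hv0,
              fun m hm => dBP_else j c _ m (by omega), dBP_j j c _⟩
      set w : Fin k → F := A.mapP v with hw
      have hwL : A.mapL v = w := by
        funext i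
        rw [mapL_apply, hw, mapP_apply, hPL]
      have hv' : ∀ i : Fin k, (i : ℕ) < j + 1 → w i = 0 := by
        intro i hi
        rcases Nat.lt_or_ge (i : ℕ) j with hij | hij
        · rw [hw, mapP_apply, hlow i hij, extD_lt v i i.isLt]
          exact hv i hij
        · have hij' : (i : ℕ) = j := by omega
          have : i = ⟨j, hjk⟩ := Fin.ext hij'
          subst this
          rw [hw, mapP_apply]
          simp only [hij']
          rw [hat, hvj, hc]
          ring
      obtain ⟨ψ, hψ1, hψ2⟩ := ih (j + 1) w (by omega) (by omega) hv'
      refine ⟨(A.toIso hk).trans ψ, ?_, ?_⟩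
      · show ψ ((A.toIso hk) (Sum.inl v)) = Sum.inl 0
        rw [Fam.toIso_inl]
        exact hψ1
      · show ψ ((A.toIso hk) (Sum.inr v)) = Sum.inr 0
        rw [Fam.toIso_inr, hwL]
        exact hψ2

lemma norm_point (hk : 2 ≤ k) (p : Fin k → F) :
    ∃ φ : DGraph k F ≃g DGraph k F, φ (Sum.inl p) = Sum.inl (0 : Fin k → F) := by
  have h0k : 0 < k := by omega
  set a : F := -(p ⟨0, h0k⟩) with ha
  set A : Fam F := tauFam a with hA
  set w : Fin k → F := A.mapP p with hw
  have hv : ∀ i : Fin k, (i : ℕ) < 1 → w i = 0 := by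
    intro i hi
    have hi0 : (i : ℕ) = 0 := by omega
    have : i = ⟨0, h0k⟩ := Fin.ext hi0
    subst this
    rw [hw, mapP_apply]
    show tauP a (extD p) 0 = 0
    rw [tauP_0, extD_lt p 0 h0k, ha]
    ring
  obtain ⟨ψ, hψ1, _⟩ := reduce_diag hk k 1 w (by omega) le_rfl hv
  refine ⟨(A.toIso hk).trans ψ, ?_⟩
  show ψ ((A.toIso hk) (Sum.inl p)) = Sum.inl 0
  rw [Fam.toIso_inl]
  exact hψ1

lemma norm_line (hk : 2 ≤ k) (l : Fin k → F) :
    ∃ φ : DGraph k F ≃g DGraph k F, φ (Sum.inr l) = Sum.inr (0 : Fin k → F) := by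
  have h0k : 0 < k := by omega
  set b : F := -(l ⟨0, h0k⟩) with hb
  set A : Fam F := sigFam b with hA
  set w : Fin k → F := A.mapL l with hw
  have hv : ∀ i : Fin k, (i : ℕ) < 1 → w i = 0 := by
    intro i hi
    have hi0 : (i : ℕ) = 0 := by omega
    have : i = ⟨0, h0k⟩ := Fin.ext hi0
    subst this
    rw [hw, mapL_apply]
    show sigL b (extD l) 0 = 0
    rw [sigL_0, extD_lt l 0 h0k, hb]
    ring
  obtain ⟨ψ, _, hψ2⟩ := reduce_diag hk k 1 w (by omega) le_rfl hv
  refine ⟨(A.toIso hk).trans ψ, ?_⟩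
  show ψ ((A.toIso hk) (Sum.inr l)) = Sum.inr 0
  rw [Fam.toIso_inr]
  exact hψ2

lemma norm_edge (hk : 2 ≤ k) (p l : Fin k → F)
    (h : (DGraph k F).Adj (Sum.inl p) (Sum.inr l)) :
    ∃ φ : DGraph k F ≃g DGraph k F,
      φ (Sum.inl p) = Sum.inl (0 : Fin k → F) ∧
      φ (Sum.inr l) = Sum.inr (0 : Fin k → F) := by
  have hinc : incD k p l := h
  have h0k : 0 < k := by omega
  -- step 1 : kill p 0
  set a : F := -(p ⟨0, h0k⟩) with ha
  set A : Fam F := tauFam a with hA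
  set p1 : Fin k → F := A.mapP p with hp1
  set l1 : Fin k → F := A.mapL l with hl1
  have hinc1 : incD k p1 l1 := fam_forward A hk p l hinc
  have hp10 : p1 ⟨0, h0k⟩ = 0 := by
    rw [hp1, mapP_apply]
    show tauP a (extD p) 0 = 0
    rw [tauP_0, extD_lt p 0 h0k, ha]; ring
  -- step 2 : kill l 0
  set b : F := -(l1 ⟨0, h0k⟩) with hb
  set B : Fam F := sigFam b with hB
  set p2 : Fin k → F := B.mapP p1 with hp2
  set l2 : Fin k → F := B.mapL l1 with hl2
  have hinc2 : incD k p2 l2 := fam_forward B hk p1 l1 hinc1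
  have hp20 : p2 ⟨0, h0k⟩ = 0 := by
    rw [hp2, mapP_apply]
    show sigP b (extD p1) 0 = 0
    rw [sigP_0, extD_lt p1 0 h0k]
    exact hp10
  have hl20 : l2 ⟨0, h0k⟩ = 0 := by
    rw [hl2, mapL_apply]
    show sigL b (extD l1) 0 = 0
    rw [sigL_0, extD_lt l1 0 h0k, hb]; ring
  -- now p2 = l2
  have hdiag : l2 = p2 := by
    funext i
    rcases Nat.eq_zero_or_pos (i : ℕ) with hi0 | hi1
    · have : i = ⟨0, h0k⟩ := Fin.ext hi0
      rw [this, hp20, hl20]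
    · have E := hinc2 (i : ℕ) hi1 i.isLt
      have hz : rhsD (extD p2) (extD l2) (i : ℕ) = 0 := by
        have hP0 : extD p2 0 = 0 := by rw [extD_lt p2 0 h0k]; exact hp20
        have hL0 : extD l2 0 = 0 := by rw [extD_lt l2 0 h0k]; exact hl20
        match (i : ℕ), hi1 with
        | 1, _ => rw [rhsD_one, hL0]; ring
        | 2, _ => rw [rhsD_two, hP0]; ring
        | (n+3), _ =>
          rw [rhsD_ge3 _ _ _ (by omega)]
          split_ifs
          · rw [hL0]; ring
          · rw [hP0]; ring
      rw [hz] at E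
      have := sub_eq_zero.mp E
      rwa [extD_lt l2 _ i.isLt, extD_lt p2 _ i.isLt] at this
  obtain ⟨ψ, hψ1, hψ2⟩ := reduce_diag hk k 1 p2
    (by omega) le_rfl (by
      intro i hi
      have hi0 : (i : ℕ) = 0 := by omega
      have : i = ⟨0, h0k⟩ := Fin.ext hi0
      rw [this]
      exact hp20)
  refine ⟨((A.toIso hk).trans (B.toIso hk)).trans ψ, ?_, ?_⟩
  · show ψ ((B.toIso hk) ((A.toIso hk) (Sum.inl p))) = Sum.inl 0
    rw [Fam.toIso_inl, Fam.toIso_inl]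
    exact hψ1
  · show ψ ((B.toIso hk) ((A.toIso hk) (Sum.inr l))) = Sum.inr 0
    rw [Fam.toIso_inr, Fam.toIso_inr, ← hl2, hdiag]
    exact hψ2

end DProof

open DProof in
/-- The automorphism group of `D(k,q)` is transitive on points, on lines,
and on edges. -/
theorem statement1 (q k : ℕ) (hk : 2 ≤ k) (F : Type) [Field F] [Fintype F]
    (hF : Fintype.card F = q) :
    (∀ p₁ p₂ : Fin k → F, ∃ φ : DGraph k F ≃g DGraph k F,
      φ (Sum.inl p₁) = Sum.inl p₂) ∧
    (∀ l₁ l₂ : Fin k → F, ∃ φ : DGraph k F ≃g DGraph k F,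
      φ (Sum.inr l₁) = Sum.inr l₂) ∧
    (∀ p₁ l₁ p₂ l₂ : Fin k → F,
      (DGraph k F).Adj (Sum.inl p₁) (Sum.inr l₁) →
      (DGraph k F).Adj (Sum.inl p₂) (Sum.inr l₂) →
      ∃ φ : DGraph k F ≃g DGraph k F,
        φ (Sum.inl p₁) = Sum.inl p₂ ∧ φ (Sum.inr l₁) = Sum.inr l₂) := by
  refine ⟨?_, ?_, ?_⟩
  · intro p₁ p₂
    obtain ⟨φ₁, h₁⟩ := norm_point hk p₁
    obtain ⟨φ₂, h₂⟩ := norm_point hk p₂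
    refine ⟨φ₁.trans φ₂.symm, ?_⟩
    show φ₂.symm (φ₁ (Sum.inl p₁)) = Sum.inl p₂
    rw [h₁, ← h₂, RelIso.symm_apply_apply]
  · intro l₁ l₂
    obtain ⟨φ₁, h₁⟩ := norm_line hk l₁
    obtain ⟨φ₂, h₂⟩ := norm_line hk l₂
    refine ⟨φ₁.trans φ₂.symm, ?_⟩
    show φ₂.symm (φ₁ (Sum.inr l₁)) = Sum.inr l₂
    rw [h₁, ← h₂, RelIso.symm_apply_apply]
  · intro p₁ l₁ p₂ l₂ h₁ h₂
    obtain ⟨φ₁, hp1, hl1⟩ := norm_edge hk p₁ l₁ h₁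
    obtain ⟨φ₂, hp2, hl2⟩ := norm_edge hk p₂ l₂ h₂
    refine ⟨φ₁.trans φ₂.symm, ?_, ?_⟩
    · show φ₂.symm (φ₁ (Sum.inl p₁)) = Sum.inl p₂
      rw [hp1, ← hp2, RelIso.symm_apply_apply]
    · show φ₂.symm (φ₁ (Sum.inr l₁)) = Sum.inr l₂
      rw [hl1, ← hl2, RelIso.symm_apply_apply]
end

section
/- Let q be a prime power, k ≥ 2 an integer, and t = ⌊(k+2)/4⌋. If two vertices x and y of D(k,q) lie in the same connected component of D(k,q), then a(x) = a(y); i.e., the vector-valued map a is constant on each connected component of D(k,q). -/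
/-- `u_{ii}` (with the convention `u_{00} = -1`). -/
def ddD {F : Type} [Field F] (u : ℕ → F) : ℕ → F
  | 0 => -1
  | 1 => u 1
  | (i + 2) => u (4 * i + 4)

/-- `u'_{ii}` (with the conventions `u'_{00} = 1`, `u'_{11} = u_{11}`). -/
def dd'D {F : Type} [Field F] (u : ℕ → F) : ℕ → F
  | 0 => 1
  | 1 => u 1
  | (i + 2) => u (4 * i + 5)

/-- `u_{i,i+1}`; for a point `p_{01} = p_1`, for a line `l_{01} = 0`. -/
def hiD {F : Type} [Field F] (isPt : Bool) (u : ℕ → F) : ℕ → F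
  | 0 => if isPt then u 0 else 0
  | 1 => u 2
  | (i + 2) => u (4 * i + 6)

/-- `u_{i,i-1}`; `u_{0,-1} = 0`, and for a point `p_{10} = 0`,
for a line `l_{10} = l_1`. -/
def loD {F : Type} [Field F] (isPt : Bool) (u : ℕ → F) : ℕ → F
  | 0 => 0
  | 1 => if isPt then 0 else u 0
  | (i + 2) => u (4 * i + 3)

/-- The invariant `a_r(x)` of a vertex `x` of `D(k,q)`. -/
def aD {F : Type} [Field F] {k : ℕ} (r : ℕ) (x : (Fin k → F) ⊕ (Fin k → F)) : F :=
  ∑ i ∈ Finset.range (r + 1),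
    (ddD (extD (Sum.elim id id x)) i * dd'D (extD (Sum.elim id id x)) (r - i) -
      hiD x.isLeft (extD (Sum.elim id id x)) i * loD x.isLeft (extD (Sum.elim id id x)) (r - i))

/-- The vector `a(x) = (a_2(x), …, a_t(x))`. -/
def aVecD {F : Type} [Field F] {k : ℕ} (t : ℕ) (x : (Fin k → F) ⊕ (Fin k → F)) :
    Fin (t - 1) → F :=
  fun j => aD (j.val + 2) x

/-!
Encode a vertex `u` by the power series `dd = Σ u_{ii} Xⁱ`, `dd' = Σ u'_{ii} Xⁱ`,
`hi = Σ u_{i,i+1} Xⁱ` and `lo = Σ u_{i,i-1} Xⁱ`; then `a_r(u)` is the coefficient of `X^r` in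
`dd * dd' - hi * lo`. If the point `p` and the line `l` are incident, the incidence equations say
that, modulo terms that cannot reach the coefficient of `X^r` for `r ≤ t`,
`dd_l = dd_p + l_1 X hi_p`, `lo_l = lo_p + l_1 X dd'_p`, `dd'_l = dd'_p + p_1 lo_l` and
`hi_l = hi_p + p_1 dd_l`. Like elementary column operations on the matrix
`[[dd, hi], [lo, dd']]`, these substitutions do not change `dd * dd' - hi * lo`, so `a` is
constant along edges and hence on connected components.
-/

open PowerSeries

theorem pow_succ_dvd_mul_sub_mul_sub {R : Type*} [CommRing R] (x : R) {n : ℕ}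
    {a a' b c A A' B C u v : R}
    (ha : x ^ (n + 1) ∣ a - (A + u * B)) (ha' : x ^ (n + 1) ∣ a' - (A' + v * c))
    (hb : x ^ n ∣ b - (B + v * a)) (hc : x ^ (n + 1) ∣ c - (C + u * A')) (hc0 : x ∣ c) :
    x ^ (n + 1) ∣ (a * a' - b * c) - (A * A' - B * C) := by
  have hbc : x ^ (n + 1) ∣ c * (b - (B + v * a)) := pow_succ' x n ▸ mul_dvd_mul hc0 hb
  -- (aa' - bc) - (AA' - BC) = a (a' - A' - vc) - c (b - B - va) + A' (a - A - uB) - B (c - C - uA')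
  convert ((ha'.mul_left a).sub hbc).add ((ha.mul_left A').sub (hc.mul_left B)) using 1
  ring

theorem PowerSeries.coeff_eq_of_X_pow_succ_dvd_sub {R : Type*} [CommRing R] {n : ℕ}
    {φ ψ : R⟦X⟧} (h : X ^ (n + 1) ∣ φ - ψ) : coeff n φ = coeff n ψ := by
  rw [← sub_eq_zero, ← map_sub]
  exact X_pow_dvd_iff.mp h n n.lt_succ_self

theorem PowerSeries.X_pow_dvd_mk_sub_add_C_mul {R : Type*} [CommRing R] {n : ℕ}
    {f g h : ℕ → R} {β : R} (hfg : ∀ m < n, f m = g m + β * h m) :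
    X ^ n ∣ mk f - (mk g + C β * mk h) :=
  X_pow_dvd_iff.mpr fun m hm => by simp [hfg m hm]

theorem PowerSeries.X_pow_dvd_mk_sub_add_X_mul {R : Type*} [CommRing R] {n : ℕ}
    {f g h : ℕ → R} {α : R} (h0 : f 0 = g 0)
    (hfg : ∀ m, m + 1 < n → f (m + 1) = g (m + 1) + α * h m) :
    X ^ n ∣ mk f - (mk g + X * C α * mk h) := by
  refine X_pow_dvd_iff.mpr fun m hm => ?_
  rcases m with _ | m
  · simp [h0]
  · simp [mul_assoc, coeff_succ_X_mul, hfg m hm]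

section

variable {R : Type} [Mul R]

theorem rhsD_four_mul_add_three (p l : ℕ → R) (j : ℕ) :
    rhsD p l (4 * j + 3) = l 0 * p (4 * j + 1) := by
  simp [rhsD]

theorem rhsD_four_mul_add_four (p l : ℕ → R) (j : ℕ) :
    rhsD p l (4 * j + 4) = l 0 * p (4 * j + 2) := by
  simp [rhsD]

theorem rhsD_four_mul_add_five (p l : ℕ → R) (j : ℕ) :
    rhsD p l (4 * j + 5) = l (4 * j + 3) * p 0 := by
  simp [rhsD]

theorem rhsD_four_mul_add_six (p l : ℕ → R) (j : ℕ) :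
    rhsD p l (4 * j + 6) = l (4 * j + 4) * p 0 := by
  simp [rhsD]

end

section

variable {F : Type} [Field F]

theorem hiD_succ (b : Bool) (u : ℕ → F) (j : ℕ) : hiD b u (j + 1) = u (4 * j + 2) := by
  rcases j with _ | j <;> rfl

theorem dd'D_succ (u : ℕ → F) (j : ℕ) : dd'D u (j + 1) = u (4 * j + 1) := by
  rcases j with _ | j <;> rfl

variable {k : ℕ} {p l : Fin k → F}

theorem ddD_extD_succ_of_incD (h : incD k p l) {i : ℕ} (hi : 4 * i + 2 ≤ k) :
    ddD (extD l) (i + 1) = ddD (extD p) (i + 1) + extD l 0 * hiD true (extD p) i := by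
  rcases i with _ | j
  · have := h 1 le_rfl (by omega)
    simp only [rhsD] at this
    simp only [ddD, hiD, reduceIte]
    linear_combination this
  · have := h (4 * j + 4) (by omega) (by omega)
    rw [rhsD_four_mul_add_four] at this
    simp only [ddD, hiD_succ]
    linear_combination this

theorem dd'D_extD_of_incD (h : incD k p l) {i : ℕ} (hi : 4 * i ≤ k + 2) :
    dd'D (extD l) i = dd'D (extD p) i + extD p 0 * loD false (extD l) i := by
  rcases i with _ | _ | j
  · simp [dd'D, loD]
  · have := h 1 (by omega) (by omega)
    simp only [rhsD] at this
    simp only [dd'D, loD, Bool.false_eq_true, reduceIte]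
    linear_combination this
  · have := h (4 * j + 5) (by omega) (by omega)
    rw [rhsD_four_mul_add_five] at this
    simp only [dd'D, loD]
    linear_combination this

theorem hiD_extD_of_incD (h : incD k p l) {i : ℕ} (hi : 4 * i + 2 ≤ k) :
    hiD false (extD l) i = hiD true (extD p) i + extD p 0 * ddD (extD l) i := by
  rcases i with _ | _ | j
  · simp [hiD, ddD]
  · have := h 2 (by omega) (by omega)
    simp only [rhsD] at this
    simp only [hiD, ddD]
    linear_combination this
  · have := h (4 * j + 6) (by omega) (by omega)
    rw [rhsD_four_mul_add_six] at this
    simp only [hiD, ddD]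
    linear_combination this

theorem loD_extD_succ_of_incD (h : incD k p l) {i : ℕ} (hi : 4 * i + 2 ≤ k) :
    loD false (extD l) (i + 1) = loD true (extD p) (i + 1) + extD l 0 * dd'D (extD p) i := by
  rcases i with _ | j
  · simp [loD, dd'D]
  · have := h (4 * j + 3) (by omega) (by omega)
    rw [rhsD_four_mul_add_three] at this
    simp only [loD, dd'D_succ]
    linear_combination this

noncomputable def aSeries (isPt : Bool) (u : ℕ → F) : F⟦X⟧ :=
  mk (ddD u) * mk (dd'D u) - mk (hiD isPt u) * mk (loD isPt u)

theorem aD_eq_coeff_aSeries (r : ℕ) (x : (Fin k → F) ⊕ (Fin k → F)) :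
    aD r x = coeff r (aSeries x.isLeft (extD (Sum.elim id id x))) := by
  simp only [aD, aSeries, map_sub, coeff_mul, coeff_mk,
    Finset.Nat.sum_antidiagonal_eq_sum_range_succ_mk, Finset.sum_sub_distrib]

theorem aD_inl_eq_aD_inr_of_incD (h : incD k p l) {r : ℕ} (hr : 4 * r ≤ k + 2) :
    aD r (Sum.inl p : (Fin k → F) ⊕ (Fin k → F)) = aD r (Sum.inr l) := by
  simp only [aD_eq_coeff_aSeries, Sum.isLeft_inl, Sum.isLeft_inr, Sum.elim_inl, Sum.elim_inr, id]
  refine (coeff_eq_of_X_pow_succ_dvd_sub (pow_succ_dvd_mul_sub_mul_sub X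
    (u := X * C (extD l 0)) (v := C (extD p 0)) ?_ ?_ ?_ ?_ ?_)).symm
  · exact X_pow_dvd_mk_sub_add_X_mul rfl fun i hi => ddD_extD_succ_of_incD h (by omega)
  · exact X_pow_dvd_mk_sub_add_C_mul fun i hi => dd'D_extD_of_incD h (by omega)
  · exact X_pow_dvd_mk_sub_add_C_mul fun i hi => hiD_extD_of_incD h (by omega)
  · exact X_pow_dvd_mk_sub_add_X_mul rfl fun i hi => loD_extD_succ_of_incD h (by omega)
  · exact X_dvd_iff.mpr (by simp [loD])

theorem aVecD_eq_of_adj {x y : (Fin k → F) ⊕ (Fin k → F)}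
    (h : (DGraph k F).Adj x y) : aVecD ((k + 2) / 4) x = aVecD ((k + 2) / 4) y := by
  funext j
  have hj : 4 * (j + 2) ≤ k + 2 := by omega
  match x, y, h with
  | Sum.inl _, Sum.inr _, h => exact aD_inl_eq_aD_inr_of_incD h hj
  | Sum.inr _, Sum.inl _, h => exact (aD_inl_eq_aD_inr_of_incD h hj).symm

end

theorem statement6_general (k : ℕ) (F : Type) [Field F] (x y : (Fin k → F) ⊕ (Fin k → F))
    (hxy : (DGraph k F).connectedComponentMk x = (DGraph k F).connectedComponentMk y) :
    aVecD ((k + 2) / 4) x = aVecD ((k + 2) / 4) y := by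
  obtain ⟨w⟩ := SimpleGraph.ConnectedComponent.exact hxy
  clear hxy
  induction w with
  | nil => rfl
  | cons hadj _ ih => exact (aVecD_eq_of_adj hadj).trans ih

/-- The map `a` is constant on each connected component of `D(k,q)`: vertices
lying in the same connected component have the same vector of invariants. -/
theorem statement6 (q k : ℕ) (hk : 2 ≤ k) (F : Type) [Field F] [Fintype F]
    (hF : Fintype.card F = q) (x y : (Fin k → F) ⊕ (Fin k → F))
    (hxy : (DGraph k F).connectedComponentMk x = (DGraph k F).connectedComponentMk y) :
    aVecD ((k + 2) / 4) x = aVecD ((k + 2) / 4) y :=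
  statement6_general k F x y hxy
end

section
/- Let q be a prime power, k ≥ 2 an integer, t = ⌊(k+2)/4⌋, and let CD(k,q) be a connected component of D(k,q), of order v and with e edges. Then, as real numbers, e ≥ 2^{−1−1/(k−t+1)} · v^{1+1/(k−t+1)}. -/
/-!
Every vertex of `D(k,q)` has exactly `q` neighbours: once the first coordinate of a neighbour
is fixed, the incidence equations form a triangular system determining its other coordinates one
after another. Hence `2e = qv`.

For `2 ≤ r ≤ t` the invariant `a_r` of Lazebnik, Ustimenko and Woldar (a quadratic polynomial in
the coordinates, with one formula for points and one for lines) takes the same value at adjacent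
vertices, so it is constant on a component. As `a_r` is `-u'_{rr}` plus a polynomial in the
coordinates preceding `u'_{rr}`, a vertex of the component is determined by its side and its
coordinates other than the `u'_{rr}`, `2 ≤ r ≤ t`. So `v ≤ 2 q^(k-t+1)`, and
`e = qv/2 ≥ (v/2) (v/2)^(1/(k-t+1))`.
-/

section ExtD
variable {α : Type} [Zero α] {k : ℕ}

theorem extD_of_lt {v : Fin k → α} {m : ℕ} (h : m < k) : extD v m = v ⟨m, h⟩ := dif_pos h

theorem extD_injective : Function.Injective (extD : (Fin k → α) → ℕ → α) :=
  fun x y h => funext fun i => by simpa only [extD_of_lt i.2] using congrFun h i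

theorem extD_of_le {v : Fin k → α} {m : ℕ} (h : k ≤ m) : extD v m = 0 := dif_neg (by omega)

end ExtD

section Triangular
variable {α : Type}

def IsTriangular (G : (ℕ → α) → ℕ → α) : Prop :=
  ∀ ⦃X Y : ℕ → α⦄ ⦃m : ℕ⦄, 1 ≤ m → (∀ j < m, X j = Y j) → G X m = G Y m

def triangularSolution (G : (ℕ → α) → ℕ → α) (a : α) : ℕ → α
  | 0 => a
  | m + 1 => G (fun j => if j ≤ m then triangularSolution G a j else a) (m + 1)
termination_by m => m
decreasing_by omega

variable {G : (ℕ → α) → ℕ → α}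

theorem triangularSolution_zero (a : α) : triangularSolution G a 0 = a := by
  rw [triangularSolution]

theorem triangularSolution_eq (hG : IsTriangular G) (a : α) {m : ℕ} (hm : 1 ≤ m) :
    triangularSolution G a m = G (triangularSolution G a) m := by
  obtain ⟨m, rfl⟩ := Nat.exists_eq_add_of_le' hm
  rw [triangularSolution]
  exact hG hm fun j hj => if_pos (by omega)

theorem eq_triangularSolution (hG : IsTriangular G) {k : ℕ} {X : ℕ → α}
    (hX : ∀ m, 1 ≤ m → m < k → X m = G X m) :
    ∀ m < k, X m = triangularSolution G (X 0) m := by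
  intro m
  induction m using Nat.strong_induction_on with
  | _ m ih =>
    intro hmk
    rcases Nat.eq_zero_or_pos m with rfl | hm
    · rw [triangularSolution_zero]
    · rw [hX m hm hmk, triangularSolution_eq hG _ hm]
      exact hG hm fun j hj => ih j hj (hj.trans hmk)

variable [Zero α] {k : ℕ}

theorem extD_triangularSolution (a : α) {m : ℕ} (h : m < k) :
    extD (fun i : Fin k => triangularSolution G a i) m = triangularSolution G a m :=
  extD_of_lt h

def triangularSolutionsEquiv (hG : IsTriangular G) (hk : 0 < k) :
    {X : Fin k → α // ∀ m, 1 ≤ m → m < k → extD X m = G (extD X) m} ≃ α where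
  toFun X := X.1 ⟨0, hk⟩
  invFun a := ⟨fun i => triangularSolution G a i, fun m hm hmk => by
    rw [extD_triangularSolution a hmk, triangularSolution_eq hG a hm]
    exact hG hm fun j hj => (extD_triangularSolution a (hj.trans hmk)).symm⟩
  left_inv X := by
    ext i
    have h := eq_triangularSolution hG X.2 i i.2
    rw [extD_of_lt i.2, extD_of_lt hk] at h
    exact h.symm
  right_inv a := triangularSolution_zero a

end Triangular

section RhsD
variable {F : Type} [Mul F]

theorem rhsD_congr_right {P L L' : ℕ → F} {m : ℕ} (hm : 1 ≤ m) (h : ∀ j < m, L j = L' j) :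
    rhsD P L m = rhsD P L' m := by
  match m, hm with
  | 1, _ => simp only [rhsD, h 0 (by omega)]
  | 2, _ => simp only [rhsD, h 1 (by omega)]
  | n + 3, _ => simp only [rhsD, h 0 (by omega), h (n + 3 - 2) (by omega)]

theorem rhsD_congr_left {P P' L : ℕ → F} {m : ℕ} (hm : 1 ≤ m) (h : ∀ j < m, P j = P' j) :
    rhsD P L m = rhsD P' L m := by
  match m, hm with
  | 1, _ => simp only [rhsD, h 0 (by omega)]
  | 2, _ => simp only [rhsD, h 0 (by omega)]
  | n + 3, _ => simp only [rhsD, h 0 (by omega), h (n + 3 - 2) (by omega)]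

theorem rhsD_of_mod_four {P L : ℕ → F} {m : ℕ} (hm : 3 ≤ m) (h : m % 4 = 0 ∨ m % 4 = 3) :
    rhsD P L m = L 0 * P (m - 2) := by
  obtain ⟨n, rfl⟩ := Nat.exists_eq_add_of_le' hm
  exact if_pos h

theorem rhsD_of_not_mod_four {P L : ℕ → F} {m : ℕ} (hm : 3 ≤ m)
    (h : ¬(m % 4 = 0 ∨ m % 4 = 3)) : rhsD P L m = L (m - 2) * P 0 := by
  obtain ⟨n, rfl⟩ := Nat.exists_eq_add_of_le' hm
  exact if_neg h

end RhsD

section Neighbours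
variable {F : Type} [Field F] {k : ℕ}

theorem isTriangular_lines (P : ℕ → F) :
    IsTriangular fun L m => P m + rhsD P L m :=
  fun _ _ _ hm h => congrArg (P _ + ·) (rhsD_congr_right hm h)

theorem isTriangular_points (L : ℕ → F) :
    IsTriangular fun P m => L m - rhsD P L m :=
  fun _ _ _ hm h => congrArg (L _ - ·) (rhsD_congr_left hm h)

theorem card_lines_incD (hk : 0 < k) (p : Fin k → F) :
    Nat.card {l // incD k p l} = Nat.card F :=
  Nat.card_congr <| (Equiv.subtypeEquivRight fun _ =>
    forall₃_congr fun _ _ _ => sub_eq_iff_eq_add').trans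
      (triangularSolutionsEquiv (isTriangular_lines (extD p)) hk)

theorem card_points_incD (hk : 0 < k) (l : Fin k → F) :
    Nat.card {p // incD k p l} = Nat.card F :=
  Nat.card_congr <| (Equiv.subtypeEquivRight fun _ =>
    forall₃_congr fun _ _ _ => by rw [sub_eq_iff_eq_add', eq_sub_iff_add_eq, eq_comm]).trans
      (triangularSolutionsEquiv (isTriangular_points (extD l)) hk)

theorem neighborSet_inl (p : Fin k → F) :
    (DGraph k F).neighborSet (Sum.inl p) = Sum.inr '' {l | incD k p l} := by
  ext (p' | l) <;> simp [DGraph]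

theorem neighborSet_inr (l : Fin k → F) :
    (DGraph k F).neighborSet (Sum.inr l) = Sum.inl '' {p | incD k p l} := by
  ext (p | l') <;> simp [DGraph]

theorem card_neighborSet_DGraph (hk : 0 < k) (x : (Fin k → F) ⊕ (Fin k → F)) :
    Nat.card ((DGraph k F).neighborSet x) = Nat.card F := by
  rcases x with p | l
  · rw [neighborSet_inl, Nat.card_image_of_injective Sum.inr_injective]
    exact card_lines_incD hk p
  · rw [neighborSet_inr, Nat.card_image_of_injective Sum.inl_injective]
    exact card_points_incD hk l

end Neighbours

namespace SimpleGraph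

theorem Reachable.apply_eq_of_forall_adj {V β : Type*} {G : SimpleGraph V}
    {f : V → β} (hf : ∀ x y, G.Adj x y → f x = f y) {x y : V} (h : G.Reachable x y) :
    f x = f y := by
  obtain ⟨w⟩ := h
  induction w with
  | nil => rfl
  | cons hadj _ ih => exact (hf _ _ hadj).trans ih

variable {V : Type*} [Finite V] {G : SimpleGraph V}

theorem two_mul_card_edgeSet_of_card_neighborSet {d : ℕ}
    (h : ∀ v, Nat.card (G.neighborSet v) = d) : 2 * Nat.card G.edgeSet = d * Nat.card V := by
  classical
  have := Fintype.ofFinite V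
  have hdeg : ∀ v, G.degree v = d := fun v => by
    rw [← card_neighborSet_eq_degree, ← Nat.card_eq_fintype_card, h]
  rw [Nat.card_eq_fintype_card, ← edgeFinset_card, ← sum_degrees_eq_twice_card_edges,
    Finset.sum_congr rfl fun v _ => hdeg v, Finset.sum_const, Finset.card_univ, smul_eq_mul,
    Nat.card_eq_fintype_card, mul_comm]

theorem ConnectedComponent.card_neighborSet_induce_supp (C : G.ConnectedComponent)
    (x : C.supp) : Nat.card ((G.induce C.supp).neighborSet x) = Nat.card (G.neighborSet x) := by
  classical
  have := Fintype.ofFinite V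
  simp only [Nat.card_eq_fintype_card, card_neighborSet_eq_degree]
  exact degree_induce_of_neighborSet_subset fun _ hy => C.mem_supp_of_adj_mem_supp x.2 hy

end SimpleGraph

/- Positions of `u_{ii}`, `u'_{ii}`, `u_{i,i+1}` and `u_{i,i-1}` in the coordinate order (counted
from `0`). The values at `0` and `1` encode the conventions `u_{01} = u_{10} = u_1` and
`u'_{11} = u_{11}`, under which all incidence equations take the four uniform shapes
`incD.diag_eq`, `incD.diag'_eq`, `incD.upper_eq` and `incD.lower_eq`. -/
def diagIdx : ℕ → ℕ
  | 0 => 0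
  | 1 => 1
  | i + 2 => 4 * i + 4

def diagIdx' : ℕ → ℕ
  | 0 => 0
  | 1 => 1
  | i + 2 => 4 * i + 5

def upperIdx : ℕ → ℕ
  | 0 => 0
  | 1 => 2
  | i + 2 => 4 * i + 6

def lowerIdx : ℕ → ℕ
  | 0 => 0
  | 1 => 0
  | 2 => 3
  | i + 3 => 4 * i + 7

theorem diagIdx_add_two (i : ℕ) : diagIdx (i + 2) = 4 * i + 4 := rfl

theorem diagIdx'_add_two (i : ℕ) : diagIdx' (i + 2) = 4 * i + 5 := rfl

theorem upperIdx_succ (i : ℕ) : upperIdx (i + 1) = 4 * i + 2 := by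
  cases i <;> rfl

theorem lowerIdx_add_two (i : ℕ) : lowerIdx (i + 2) = 4 * i + 3 := by
  cases i <;> rfl

theorem diagIdx_succ_le (i : ℕ) : diagIdx (i + 1) ≤ 4 * i + 1 := by
  rcases i with _ | i
  · rfl
  · rw [diagIdx_add_two]; omega

theorem diagIdx'_succ_le (i : ℕ) : diagIdx' (i + 1) ≤ 4 * i + 1 := by
  rcases i with _ | i
  · rfl
  · rw [diagIdx'_add_two]; omega

theorem lowerIdx_succ_le (i : ℕ) : lowerIdx (i + 1) ≤ 4 * i := by
  rcases i with _ | i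
  · rfl
  · rw [lowerIdx_add_two]; omega

namespace incD
variable {F : Type} [Field F] {k : ℕ} {p l : Fin k → F}

theorem coord_eq (h : incD k p l) {m : ℕ} (h1 : 1 ≤ m) (h2 : m < k) :
    extD l m = extD p m + rhsD (extD p) (extD l) m :=
  eq_add_of_sub_eq' (h m h1 h2)

theorem diag_eq (h : incD k p l) {i : ℕ} (hi : diagIdx (i + 1) < k) :
    extD l (diagIdx (i + 1)) = extD p (diagIdx (i + 1)) + extD l 0 * extD p (upperIdx i) := by
  rcases i with _ | i
  · exact h.coord_eq le_rfl hi
  · rw [upperIdx_succ]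
    show extD l (4 * i + 4) = extD p (4 * i + 4) + extD l 0 * extD p (4 * i + 2)
    rw [h.coord_eq (m := 4 * i + 4) (by omega) hi, rhsD_of_mod_four (by omega) (by omega),
      show 4 * i + 4 - 2 = 4 * i + 2 by omega]

theorem diag'_eq (h : incD k p l) {i : ℕ} (hi : diagIdx' (i + 1) < k) :
    extD l (diagIdx' (i + 1))
      = extD p (diagIdx' (i + 1)) + extD p 0 * extD l (lowerIdx (i + 1)) := by
  rcases i with _ | i
  · show extD l 1 = extD p 1 + extD p 0 * extD l 0
    rw [h.coord_eq le_rfl hi]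
    exact congrArg _ (mul_comm _ _)
  · rw [lowerIdx_add_two]
    show extD l (4 * i + 5) = extD p (4 * i + 5) + extD p 0 * extD l (4 * i + 3)
    rw [h.coord_eq (m := 4 * i + 5) (by omega) hi, rhsD_of_not_mod_four (by omega) (by omega),
      show 4 * i + 5 - 2 = 4 * i + 3 by omega]
    exact congrArg _ (mul_comm _ _)

theorem upper_eq (h : incD k p l) {i : ℕ} (hi : upperIdx (i + 1) < k) :
    extD l (upperIdx (i + 1))
      = extD p (upperIdx (i + 1)) + extD p 0 * extD l (diagIdx (i + 1)) := by
  rcases i with _ | i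
  · show extD l 2 = extD p 2 + extD p 0 * extD l 1
    rw [h.coord_eq (m := 2) (by norm_num) hi]
    exact congrArg _ (mul_comm _ _)
  · show extD l (4 * i + 6) = extD p (4 * i + 6) + extD p 0 * extD l (4 * i + 4)
    rw [h.coord_eq (m := 4 * i + 6) (by omega) hi, rhsD_of_not_mod_four (by omega) (by omega),
      show 4 * i + 6 - 2 = 4 * i + 4 by omega]
    exact congrArg _ (mul_comm _ _)

theorem lower_eq (h : incD k p l) {i : ℕ} (hi0 : 1 ≤ i) (hi : lowerIdx (i + 1) < k) :
    extD l (lowerIdx (i + 1)) = extD p (lowerIdx (i + 1)) + extD l 0 * extD p (diagIdx' i) := by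
  obtain ⟨i, rfl⟩ := Nat.exists_eq_add_of_le' hi0
  rw [lowerIdx_add_two] at hi ⊢
  rw [h.coord_eq (by omega) hi, rhsD_of_mod_four (by omega) (by omega),
    show 4 * i + 3 - 2 = diagIdx' (i + 1) by rcases i with _ | i <;> rfl]

end incD

section Invariants
open Finset
variable {F : Type} [CommRing F]

/- `pointInvariant s` and `lineInvariant s` are the invariant `a_{s+2}` of Lazebnik, Ustimenko and
Woldar, evaluated at a point and at a line; `invCore s` is the part they share. -/
def invCore (s : ℕ) (P : ℕ → F) : F :=
  P (diagIdx (s + 2)) - P (diagIdx' (s + 2))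
    + ∑ j ∈ range (s + 1), P (diagIdx (j + 1)) * P (diagIdx' (s + 1 - j))
    - ∑ j ∈ range s, P (upperIdx (j + 1)) * P (lowerIdx (s + 1 - j))

def pointInvariant (s : ℕ) (P : ℕ → F) : F := invCore s P - P 0 * P (lowerIdx (s + 2))

def lineInvariant (s : ℕ) (L : ℕ → F) : F := invCore s L - L 0 * L (upperIdx (s + 1))

theorem invCore_add_congr {s : ℕ} {P P' : ℕ → F} (h : ∀ j < 4 * s + 5, P j = P' j) :
    invCore s P + P (4 * s + 5) = invCore s P' + P' (4 * s + 5) := by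
  have hsum₁ : ∑ j ∈ range (s + 1), P (diagIdx (j + 1)) * P (diagIdx' (s + 1 - j))
      = ∑ j ∈ range (s + 1), P' (diagIdx (j + 1)) * P' (diagIdx' (s + 1 - j)) :=
    sum_congr rfl fun j hj => by
      have := mem_range.1 hj
      rw [show s + 1 - j = s - j + 1 by omega, h _ ((diagIdx_succ_le _).trans_lt (by omega)),
        h _ ((diagIdx'_succ_le _).trans_lt (by omega))]
  have hsum₂ : ∑ j ∈ range s, P (upperIdx (j + 1)) * P (lowerIdx (s + 1 - j))
      = ∑ j ∈ range s, P' (upperIdx (j + 1)) * P' (lowerIdx (s + 1 - j)) :=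
    sum_congr rfl fun j hj => by
      have := mem_range.1 hj
      rw [show s + 1 - j = s - j + 1 by omega, upperIdx_succ, h _ (by omega),
        h _ ((lowerIdx_succ_le _).trans_lt (by omega))]
  simp only [invCore, hsum₁, hsum₂, diagIdx_add_two, diagIdx'_add_two, h (4 * s + 4) (by omega)]
  ring

theorem pointInvariant_add_congr {s : ℕ} {P P' : ℕ → F} (h : ∀ j < 4 * s + 5, P j = P' j) :
    pointInvariant s P + P (4 * s + 5) = pointInvariant s P' + P' (4 * s + 5) := by
  have := invCore_add_congr h
  rw [pointInvariant, pointInvariant, h 0 (by omega), lowerIdx_add_two, h (4 * s + 3) (by omega)]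
  linear_combination this

theorem lineInvariant_add_congr {s : ℕ} {P P' : ℕ → F} (h : ∀ j < 4 * s + 5, P j = P' j) :
    lineInvariant s P + P (4 * s + 5) = lineInvariant s P' + P' (4 * s + 5) := by
  have := invCore_add_congr h
  rw [lineInvariant, lineInvariant, h 0 (by omega), upperIdx_succ, h (4 * s + 2) (by omega)]
  linear_combination this

theorem lineInvariant_eq_pointInvariant {s : ℕ} {P L : ℕ → F}
    (hdiag : ∀ i ≤ s + 1, L (diagIdx (i + 1)) = P (diagIdx (i + 1)) + L 0 * P (upperIdx i))
    (hdiag' : ∀ i ≤ s + 1,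
      L (diagIdx' (i + 1)) = P (diagIdx' (i + 1)) + P 0 * L (lowerIdx (i + 1)))
    (hupper : ∀ i ≤ s, L (upperIdx (i + 1)) = P (upperIdx (i + 1)) + P 0 * L (diagIdx (i + 1)))
    (hlower : ∀ i, 1 ≤ i → i ≤ s + 1 →
      L (lowerIdx (i + 1)) = P (lowerIdx (i + 1)) + L 0 * P (diagIdx' i)) :
    lineInvariant s L = pointInvariant s P := by
  have hsum₁ : ∀ j ∈ range (s + 1), L (diagIdx (j + 1)) * L (diagIdx' (s + 1 - j))
      = P (diagIdx (j + 1)) * P (diagIdx' (s + 1 - j))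
        + L 0 * (P (upperIdx j) * P (diagIdx' (s + 1 - j)))
        + P 0 * (L (diagIdx (j + 1)) * L (lowerIdx (s + 1 - j))) := fun j hj => by
    have := mem_range.1 hj
    rw [show s + 1 - j = s - j + 1 by omega, hdiag j (by omega), hdiag' (s - j) (by omega)]
    ring
  have hsum₂ : ∀ j ∈ range s, L (upperIdx (j + 1)) * L (lowerIdx (s + 1 - j))
      = P (upperIdx (j + 1)) * P (lowerIdx (s + 1 - j))
        + L 0 * (P (upperIdx (j + 1)) * P (diagIdx' (s - j)))
        + P 0 * (L (diagIdx (j + 1)) * L (lowerIdx (s + 1 - j))) := fun j hj => by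
    have := mem_range.1 hj
    rw [show s + 1 - j = s - j + 1 by omega, hupper j (by omega),
      hlower (s - j) (by omega) (by omega)]
    ring
  -- the two correction sums telescope, leaving one boundary term each
  have hfirst : ∑ j ∈ range (s + 1), P (upperIdx j) * P (diagIdx' (s + 1 - j))
      = ∑ j ∈ range s, P (upperIdx (j + 1)) * P (diagIdx' (s - j))
        + P 0 * P (diagIdx' (s + 1)) := by
    rw [sum_range_succ']
    simp only [Nat.add_sub_add_right]
    rfl
  have hlast : ∑ j ∈ range (s + 1), L (diagIdx (j + 1)) * L (lowerIdx (s + 1 - j))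
      = ∑ j ∈ range s, L (diagIdx (j + 1)) * L (lowerIdx (s + 1 - j))
        + L (diagIdx (s + 1)) * L 0 := by
    rw [sum_range_succ, Nat.add_sub_cancel_left]
    rfl
  have htop : L (diagIdx (s + 2)) = P (diagIdx (s + 2)) + L 0 * P (upperIdx (s + 1)) :=
    hdiag (s + 1) le_rfl
  have htop' : L (diagIdx' (s + 2)) = P (diagIdx' (s + 2)) + P 0 * L (lowerIdx (s + 2)) :=
    hdiag' (s + 1) le_rfl
  have hlow : L (lowerIdx (s + 2)) = P (lowerIdx (s + 2)) + L 0 * P (diagIdx' (s + 1)) :=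
    hlower (s + 1) (by omega) le_rfl
  rw [lineInvariant, pointInvariant, invCore, invCore, sum_congr rfl hsum₁, sum_congr rfl hsum₂]
  simp only [sum_add_distrib, ← mul_sum]
  rw [hfirst, hlast, htop, htop', hlow, hupper s le_rfl]
  ring

end Invariants

theorem incD.lineInvariant_eq {F : Type} [Field F] {k : ℕ} {p l : Fin k → F} (h : incD k p l)
    {s : ℕ} (hs : 4 * s + 5 < k) : lineInvariant s (extD l) = pointInvariant s (extD p) :=
  lineInvariant_eq_pointInvariant
    (fun _ hi => h.diag_eq ((diagIdx_succ_le _).trans_lt (by omega)))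
    (fun _ hi => h.diag'_eq ((diagIdx'_succ_le _).trans_lt (by omega)))
    (fun _ hi => h.upper_eq (by rw [upperIdx_succ]; omega))
    (fun _ hi0 hi => h.lower_eq hi0 ((lowerIdx_succ_le _).trans_lt (by omega)))

section Counting
open Finset
variable {F : Type} [CommRing F] {k : ℕ}

theorem eq_of_invariants_eq {A : ℕ → (ℕ → F) → F}
    (hA : ∀ s {P P' : ℕ → F}, (∀ j < 4 * s + 5, P j = P' j) →
      A s P + P (4 * s + 5) = A s P' + P' (4 * s + 5))
    {T : ℕ} {P P' : ℕ → F} (hfree : ∀ m ∉ (range T).image (4 * · + 5), P m = P' m)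
    (hinv : ∀ s < T, A s P = A s P') : P = P' := by
  funext m
  induction m using Nat.strong_induction_on with
  | _ m ih =>
    by_cases hm : m ∈ (range T).image (4 * · + 5)
    · obtain ⟨s, hs, rfl⟩ := mem_image.1 hm
      linear_combination hA s ih - hinv s (mem_range.1 hs)
    · exact hfree m hm

theorem card_le_of_invariants_eq [Finite F] {A : ℕ → (ℕ → F) → F}
    (hA : ∀ s {P P' : ℕ → F}, (∀ j < 4 * s + 5, P j = P' j) →
      A s P + P (4 * s + 5) = A s P' + P' (4 * s + 5))
    {T : ℕ} (hT : 4 * T + 1 < k) (S : Set (Fin k → F))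
    (hS : ∀ x ∈ S, ∀ y ∈ S, ∀ s < T, A s (extD x) = A s (extD y)) :
    Nat.card S ≤ Nat.card F ^ (k - T) := by
  set D := (range T).image (4 * · + 5)
  have hD : D ⊆ range k := fun m hm => by
    obtain ⟨s, hs, rfl⟩ := mem_image.1 hm
    have := mem_range.1 hs
    exact mem_range.2 (by omega)
  have hcard : #(range k \ D) = k - T := by
    rw [card_sdiff_of_subset hD, card_range,
      card_image_of_injective _ fun _ _ hab => by omega, card_range]
  let restrict : S → (↥(range k \ D) → F) := fun x m => extD x.1 m
  have hrestrict : Function.Injective restrict := by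
    rintro ⟨x, hx⟩ ⟨y, hy⟩ hxy
    refine Subtype.ext (extD_injective (eq_of_invariants_eq hA (fun m hm => ?_) (hS x hx y hy)))
    by_cases hmk : m < k
    · exact congrFun hxy ⟨m, mem_sdiff.2 ⟨mem_range.2 hmk, hm⟩⟩
    · rw [extD_of_le (not_lt.1 hmk), extD_of_le (not_lt.1 hmk)]
  calc Nat.card S ≤ Nat.card (↥(range k \ D) → F) := Nat.card_le_card_of_injective _ hrestrict
    _ = Nat.card F ^ (k - T) := by rw [Nat.card_fun, Nat.card_eq_finsetCard, hcard]

end Counting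

def vertexInvariant (k : ℕ) (F : Type) [CommRing F] (s : ℕ) :
    (Fin k → F) ⊕ (Fin k → F) → F :=
  Sum.elim (fun p => pointInvariant s (extD p)) (fun l => lineInvariant s (extD l))

section Component
variable {F : Type} [Field F] {k : ℕ}

theorem vertexInvariant_eq_of_adj {s : ℕ} (hs : 4 * s + 5 < k)
    {x y : (Fin k → F) ⊕ (Fin k → F)} (hxy : (DGraph k F).Adj x y) :
    vertexInvariant k F s x = vertexInvariant k F s y := by
  match x, y, hxy with
  | Sum.inl _, Sum.inr _, h => exact (incD.lineInvariant_eq h hs).symm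
  | Sum.inr _, Sum.inl _, h => exact incD.lineInvariant_eq h hs

theorem card_supp_le_two_mul_pow [Finite F] (C : (DGraph k F).ConnectedComponent) {T : ℕ}
    (hT : 4 * T + 1 < k) : Nat.card C.supp ≤ 2 * Nat.card F ^ (k - T) := by
  have hinv : ∀ x ∈ C.supp, ∀ y ∈ C.supp, ∀ s < T,
      vertexInvariant k F s x = vertexInvariant k F s y := fun x hx y hy s hs =>
    (C.reachable_of_mem_supp hx hy).apply_eq_of_forall_adj
      fun _ _ => vertexInvariant_eq_of_adj (by omega)
  rw [Nat.card_congr Equiv.subtypeSum, Nat.card_sum, two_mul]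
  exact add_le_add
    (card_le_of_invariants_eq (fun _ _ _ => pointInvariant_add_congr) hT {p | Sum.inl p ∈ C.supp}
      fun p hp p' hp' => hinv _ hp _ hp')
    (card_le_of_invariants_eq (fun _ _ _ => lineInvariant_add_congr) hT {l | Sum.inr l ∈ C.supp}
      fun l hl l' hl' => hinv _ hl _ hl')

end Component

theorem two_rpow_mul_rpow_le_mul_div_two {v q : ℝ} {N : ℕ} (hN : N ≠ 0) (hv : 0 < v)
    (hq : 0 ≤ q) (hvq : v ≤ 2 * q ^ N) :
    (2 : ℝ) ^ (-1 - 1 / (N : ℝ)) * v ^ (1 + 1 / (N : ℝ)) ≤ q * v / 2 := by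
  have hroot : (v / 2) ^ (1 / (N : ℝ)) ≤ q := by
    calc (v / 2) ^ (1 / (N : ℝ)) ≤ (q ^ N) ^ (1 / (N : ℝ)) :=
          Real.rpow_le_rpow (by positivity) (by linarith) (by positivity)
      _ = q := by rw [one_div, Real.pow_rpow_inv_natCast hq hN]
  have hsplit : (2 : ℝ) ^ (-1 - 1 / (N : ℝ)) * v ^ (1 + 1 / (N : ℝ))
      = v / 2 * (v / 2) ^ (1 / (N : ℝ)) := by
    rw [sub_eq_add_neg, Real.rpow_add two_pos, Real.rpow_add hv, Real.div_rpow hv.le zero_le_two,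
      Real.rpow_neg zero_le_two, Real.rpow_neg zero_le_two, Real.rpow_one, Real.rpow_one]
    field_simp
  calc _ = v / 2 * (v / 2) ^ (1 / (N : ℝ)) := hsplit
    _ ≤ v / 2 * q := by gcongr
    _ = q * v / 2 := by ring

theorem statement13_general (k : ℕ) (hk : 2 ≤ k) (F : Type) [Field F] [Fintype F]
    (C : (DGraph k F).ConnectedComponent)
    (v e : ℕ) (hv : v = Nat.card C.supp)
    (he : e = Nat.card ((DGraph k F).induce C.supp).edgeSet) :
    (2 : ℝ) ^ (-1 - 1 / ((k - (k + 2) / 4 + 1 : ℕ) : ℝ)) *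
      (v : ℝ) ^ (1 + 1 / ((k - (k + 2) / 4 + 1 : ℕ) : ℝ)) ≤ (e : ℝ) := by
  have hedges : 2 * e = Nat.card F * v := by
    rw [he, hv]
    refine SimpleGraph.two_mul_card_edgeSet_of_card_neighborSet fun x => ?_
    rw [C.card_neighborSet_induce_supp, card_neighborSet_DGraph (by omega)]
  have hsize : v ≤ 2 * Nat.card F ^ (k - (k + 2) / 4 + 1) := by
    rw [hv, show k - (k + 2) / 4 + 1 = k - ((k + 2) / 4 - 1) by omega]
    exact card_supp_le_two_mul_pow C (by omega)
  have : Nonempty C.supp := ⟨⟨C.out, C.out_eq⟩⟩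
  have hpos : 0 < v := hv ▸ Nat.card_pos
  calc _ ≤ (Nat.card F : ℝ) * v / 2 :=
        two_rpow_mul_rpow_le_mul_div_two (by omega) (by exact_mod_cast hpos) (Nat.cast_nonneg _)
          (by exact_mod_cast hsize)
    _ = e := by rw [div_eq_iff two_ne_zero, mul_comm (e : ℝ)]; exact_mod_cast hedges.symm

/-- If `v` is the order and `e` the size of a connected component `CD(k,q)` of
`D(k,q)`, and `t = ⌊(k+2)/4⌋`, then
`e ≥ 2^(-1-1/(k-t+1)) * v^(1+1/(k-t+1))` as real numbers. -/
theorem statement13 (q k : ℕ) (hk : 2 ≤ k) (F : Type) [Field F] [Fintype F]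
    (hF : Fintype.card F = q) (C : (DGraph k F).ConnectedComponent)
    (v e : ℕ) (hv : v = Nat.card C.supp)
    (he : e = Nat.card ((DGraph k F).induce C.supp).edgeSet) :
    (2 : ℝ) ^ (-1 - 1 / ((k - (k + 2) / 4 + 1 : ℕ) : ℝ)) *
      (v : ℝ) ^ (1 + 1 / ((k - (k + 2) / 4 + 1 : ℕ) : ℝ)) ≤ (e : ℝ) :=
  statement13_general k hk F C v e hv he
end
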